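/- arXiv:1906.06202 — 10 statements merged into one kernel-verified Lean document; each statement's English description precedes it below -/
import Mathlib

section
/- Let A ⊆ B be a C*-inclusion and J a closed two-sided ideal of B. The composite map A → B → B/J into the quotient C*-algebra is injective if and only if J ∩ A = {0}. If J ∩ A = {0}, then the image of A detects ideals in B/J if and only if J is a maximal element (with respect to inclusion) of the set 𝕀₀(B) of all closed two-sided ideals J' of B with J' ∩ A = {0}. -/
/-- A closed (ring-theoretic) two-sided ideal of `B`. -/
def IsClosedTwoSidedIdeal {B : Type*} [NonUnitalCStarAlgebra B] (S : Set B) : Prop :=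
  IsClosed S ∧ (0 : B) ∈ S ∧ (∀ x ∈ S, ∀ y ∈ S, x + y ∈ S) ∧ (∀ x ∈ S, -x ∈ S) ∧
    (∀ b : B, ∀ x ∈ S, b * x ∈ S) ∧ ∀ b : B, ∀ x ∈ S, x * b ∈ S

/-- A closed *-subalgebra of `B`. -/
def IsCStarSubalgebra {B : Type*} [NonUnitalCStarAlgebra B] (A : Set B) : Prop :=
  IsClosed A ∧ (0 : B) ∈ A ∧ (∀ x ∈ A, ∀ y ∈ A, x + y ∈ A) ∧
    (∀ (c : ℂ), ∀ x ∈ A, c • x ∈ A) ∧ (∀ x ∈ A, ∀ y ∈ A, x * y ∈ A) ∧ ∀ x ∈ A, star x ∈ A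

theorem IsCStarSubalgebra.sub_mem {B : Type*} [NonUnitalCStarAlgebra B] {A : Set B}
    (hA : IsCStarSubalgebra A) {x y : B} (hx : x ∈ A) (hy : y ∈ A) : x - y ∈ A := by
  have hny : -y ∈ A := by simpa using hA.2.2.2.1 (-1) y hy
  simpa [sub_eq_add_neg] using hA.2.2.1 x hx (-y) hny

/-- Injectivity of `A → G ⧸ J`, phrased without forming the quotient. -/
theorem sub_mem_imp_eq_iff_inter_eq_zero {G : Type*} [AddGroup G] {A J : Set G}
    (hA0 : 0 ∈ A) (hA_sub : ∀ x ∈ A, ∀ y ∈ A, x - y ∈ A) (hJ0 : 0 ∈ J) :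
    (∀ a₁ ∈ A, ∀ a₂ ∈ A, a₁ - a₂ ∈ J → a₁ = a₂) ↔ J ∩ A = {0} := by
  constructor
  · refine fun h => Set.eq_singleton_iff_unique_mem.2 ⟨⟨hJ0, hA0⟩, ?_⟩
    rintro x ⟨hxJ, hxA⟩
    exact h x hxA 0 hA0 (by simpa using hxJ)
  · intro h a₁ h₁ a₂ h₂ hJ
    have hdiff : a₁ - a₂ ∈ J ∩ A := ⟨hJ, hA_sub a₁ h₁ a₂ h₂⟩
    rw [h] at hdiff
    exact sub_eq_zero.mp hdiff

theorem Set.inter_subset_iff_inter_eq_of_subset {α : Type*} {A J K : Set α} (hJK : J ⊆ K) :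
    K ∩ A ⊆ J ↔ K ∩ A = J ∩ A :=
  ⟨fun h => (Set.subset_inter h Set.inter_subset_right).antisymm
      (Set.inter_subset_inter_left A hJK),
    fun h => h ▸ Set.inter_subset_left⟩

theorem forall_ne_exists_mem_diff_iff_maximal {α : Type*} {P : Set α → Prop} {A J : Set α} :
    (∀ K, P K → J ⊆ K → K ≠ J → ∃ a ∈ A, a ∈ K ∧ a ∉ J) ↔
      ∀ K, P K → K ∩ A = J ∩ A → J ⊆ K → K = J := by
  refine forall_congr' fun K => imp_congr_right fun _ => ?_
  refine ⟨fun h hKA hJK => ?_, fun h hJK hne => ?_⟩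
  · by_contra hne
    obtain ⟨a, haA, haK, haJ⟩ := h hJK hne
    exact haJ (((Set.inter_subset_iff_inter_eq_of_subset hJK).2 hKA) ⟨haK, haA⟩)
  · by_contra hno
    exact hne (h ((Set.inter_subset_iff_inter_eq_of_subset hJK).1
      fun x ⟨hxK, hxA⟩ => by_contra fun hxJ => hno ⟨x, hxA, hxK, hxJ⟩) hJK)

theorem detection_in_quotient_general
    {B : Type*} [NonUnitalCStarAlgebra B] (A J : Set B)
    (hA : IsCStarSubalgebra A)
    (hJ : IsClosedTwoSidedIdeal J) :
    ((∀ a₁ ∈ A, ∀ a₂ ∈ A, a₁ - a₂ ∈ J → a₁ = a₂) ↔ J ∩ A = {0}) ∧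
    (J ∩ A = {0} →
      ((∀ K : Set B, IsClosedTwoSidedIdeal K → J ⊆ K → K ≠ J →
          ∃ a ∈ A, a ∈ K ∧ a ∉ J) ↔
        (J ∩ A = {0} ∧
          ∀ K : Set B, IsClosedTwoSidedIdeal K → K ∩ A = {0} → J ⊆ K → K = J))) := by
  refine ⟨sub_mem_imp_eq_iff_inter_eq_zero hA.2.1 (fun _ hx _ hy => hA.sub_mem hx hy) hJ.2.1,
    fun hJA => ?_⟩
  rw [forall_ne_exists_mem_diff_iff_maximal, hJA, eq_self, true_and]

/-- Let `A ⊆ B` be a C*-inclusion and `J` a closed two-sided ideal of `B`.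
The composite `A → B → B/J` is injective iff `J ∩ A = {0}`.  If `J ∩ A = {0}`, then the
image of `A` detects ideals in `B/J` (equivalently, via the bijection between ideals of
`B/J` and ideals of `B` containing `J`: every closed two-sided ideal `K ⊋ J` of `B`
contains some `a ∈ A` with `a ∉ J`) iff `J` is a maximal element of the set `𝕀₀(B)` of
closed two-sided ideals having trivial intersection with `A`. -/
theorem detection_in_quotient
    {B : Type*} [NonUnitalCStarAlgebra B] (A J : Set B)
    (hA : IsCStarSubalgebra A) (hA0 : ∃ x ∈ A, x ≠ 0)
    (hJ : IsClosedTwoSidedIdeal J) :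
    ((∀ a₁ ∈ A, ∀ a₂ ∈ A, a₁ - a₂ ∈ J → a₁ = a₂) ↔ J ∩ A = {0}) ∧
    (J ∩ A = {0} →
      ((∀ K : Set B, IsClosedTwoSidedIdeal K → J ⊆ K → K ≠ J →
          ∃ a ∈ A, a ∈ K ∧ a ∉ J) ↔
        (J ∩ A = {0} ∧
          ∀ K : Set B, IsClosedTwoSidedIdeal K → K ∩ A = {0} → J ⊆ K → K = J))) :=
  detection_in_quotient_general A J hA hJ
end

section
/- Let A ⊆ B be a C*-inclusion. Then: (1) B is simple if and only if A detects ideals in B and A is B-minimal. (2) If A ⊆ B has the generalised intersection property with hidden ideal N, and A is B-minimal, then the quotient B/N is simple; that is, the only closed two-sided ideals K of B with N ⊆ K are N and B. -/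
/-- A closed (ring-theoretic) two-sided ideal of the subalgebra `A ⊆ B`. -/
def IsClosedIdealOfSub {B : Type*} [NonUnitalCStarAlgebra B] (A I : Set B) : Prop :=
  I ⊆ A ∧ IsClosed I ∧ (0 : B) ∈ I ∧ (∀ x ∈ I, ∀ y ∈ I, x + y ∈ I) ∧
    (∀ x ∈ I, -x ∈ I) ∧ ∀ a ∈ A, ∀ x ∈ I, a * x ∈ I ∧ x * a ∈ I

/-- `A` is `B`-minimal: for every nonzero closed two-sided ideal `I` of `A`, the closed
linear span of `B·I·B` is all of `B`. -/
def IsBMinimal {B : Type*} [NonUnitalCStarAlgebra B] (A : Set B) : Prop :=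
  ∀ I : Set B, IsClosedIdealOfSub A I → I ≠ {0} →
    closure (Submodule.span ℂ {z : B | ∃ b₁ b₂ : B, ∃ i ∈ I, z = b₁ * i * b₂} : Set B)
      = Set.univ

/-- `A` detects ideals in `B`: every nonzero closed two-sided ideal meets `A`
nontrivially. -/
def DetectsIdeals {B : Type*} [NonUnitalCStarAlgebra B] (A : Set B) : Prop :=
  ∀ J : Set B, IsClosedTwoSidedIdeal J → J ≠ {0} → J ∩ A ≠ {0}

/-!
If `A` is `B`-minimal, a closed ideal `K` of `B` with `K ∩ A ≠ 0` contains the closed span of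
`B (K ∩ A) B`, which is all of `B`; so under detection every nonzero ideal is `B`, and under the
generalised intersection property every ideal not contained in `N` is `B`. Conversely, if `B` is
simple then the closed span of `B I B` is a nonzero ideal (it contains `i* i i* ≠ 0` for
`0 ≠ i ∈ I`), hence equals `B`.
-/

namespace CStarInclusion

variable {B : Type*} [NonUnitalCStarAlgebra B]

def sandwiches (I : Set B) : Set B := {z : B | ∃ b₁ b₂ : B, ∃ i ∈ I, z = b₁ * i * b₂}

theorem span_sandwiches_subset {I J : Set B} (hJ : IsClosedTwoSidedIdeal J) (hIJ : I ⊆ J) :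
    (Submodule.span ℂ (sandwiches I) : Set B) ⊆ J := by
  obtain ⟨-, hJ0, hJadd, -, hJl, hJr⟩ := hJ
  intro x hx
  rw [SetLike.mem_coe, ← Submodule.mem_toAddSubmonoid, Submodule.span_eq_closure] at hx
  induction hx using AddSubmonoid.closure_induction with
  | mem _ hx =>
    obtain ⟨c, -, _, ⟨b₁, b₂, i, hi, rfl⟩, rfl⟩ := Set.mem_smul.mp hx
    rw [mul_assoc, ← smul_mul_assoc]
    exact hJl _ _ (hJr _ _ (hIJ hi))
  | zero => exact hJ0
  | add _ _ _ _ hx hy => exact hJadd _ hx _ hy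

theorem closure_span_sandwiches_subset {I J : Set B} (hJ : IsClosedTwoSidedIdeal J)
    (hIJ : I ⊆ J) : closure (Submodule.span ℂ (sandwiches I) : Set B) ⊆ J :=
  closure_minimal (span_sandwiches_subset hJ hIJ) hJ.1

theorem mul_left_mem_span_sandwiches (I : Set B) (b : B) {x : B}
    (hx : x ∈ Submodule.span ℂ (sandwiches I)) : b * x ∈ Submodule.span ℂ (sandwiches I) := by
  have hle : (Submodule.span ℂ (sandwiches I)).map (LinearMap.mulLeft ℂ b) ≤
      Submodule.span ℂ (sandwiches I) := by
    rw [Submodule.map_span, Submodule.span_le]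
    rintro _ ⟨_, ⟨b₁, b₂, i, hi, rfl⟩, rfl⟩
    exact Submodule.subset_span
      ⟨b * b₁, b₂, i, hi, by simp only [LinearMap.mulLeft_apply, mul_assoc]⟩
  exact hle ⟨x, hx, rfl⟩

theorem mul_right_mem_span_sandwiches (I : Set B) (b : B) {x : B}
    (hx : x ∈ Submodule.span ℂ (sandwiches I)) : x * b ∈ Submodule.span ℂ (sandwiches I) := by
  have hle : (Submodule.span ℂ (sandwiches I)).map (LinearMap.mulRight ℂ b) ≤
      Submodule.span ℂ (sandwiches I) := by
    rw [Submodule.map_span, Submodule.span_le]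
    rintro _ ⟨_, ⟨b₁, b₂, i, hi, rfl⟩, rfl⟩
    exact Submodule.subset_span
      ⟨b₁, b₂ * b, i, hi, by simp only [LinearMap.mulRight_apply, mul_assoc]⟩
  exact hle ⟨x, hx, rfl⟩

theorem isClosedTwoSidedIdeal_closure_span_sandwiches (I : Set B) :
    IsClosedTwoSidedIdeal (closure (Submodule.span ℂ (sandwiches I) : Set B)) := by
  set M := Submodule.span ℂ (sandwiches I)
  rw [← Submodule.topologicalClosure_coe]
  refine ⟨M.isClosed_topologicalClosure, M.topologicalClosure.zero_mem,
    fun x hx y hy => M.topologicalClosure.add_mem hx hy,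
    fun x hx => M.topologicalClosure.neg_mem hx, fun b x hx => ?_, fun b x hx => ?_⟩
  · exact map_mem_closure (f := (b * ·)) (continuous_const_mul b) hx
      fun _ hy => mul_left_mem_span_sandwiches I b hy
  · exact map_mem_closure (f := (· * b)) (continuous_mul_const b) hx
      fun _ hy => mul_right_mem_span_sandwiches I b hy

theorem star_mul_self_mul_star_ne_zero {i : B} (hi : i ≠ 0) : star i * i * star i ≠ 0 := by
  intro h
  have hsq : star (i * star i) * (i * star i) = 0 := by
    rw [star_mul, star_star, mul_assoc, ← mul_assoc (star i), h, mul_zero]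
  exact hi ((CStarRing.mul_star_self_eq_zero_iff i).mp
    ((CStarRing.star_mul_self_eq_zero_iff _).mp hsq))

theorem isClosedIdealOfSub_inter {A J : Set B} (hA : IsCStarSubalgebra A)
    (hJ : IsClosedTwoSidedIdeal J) : IsClosedIdealOfSub A (J ∩ A) := by
  obtain ⟨hAcl, hA0, hAadd, hAsmul, hAmul, -⟩ := hA
  obtain ⟨hJcl, hJ0, hJadd, hJneg, hJl, hJr⟩ := hJ
  refine ⟨Set.inter_subset_right, hJcl.inter hAcl, ⟨hJ0, hA0⟩, ?_, ?_, ?_⟩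
  · exact fun x ⟨hxJ, hxA⟩ y ⟨hyJ, hyA⟩ => ⟨hJadd _ hxJ _ hyJ, hAadd _ hxA _ hyA⟩
  · rintro x ⟨hxJ, hxA⟩
    exact ⟨hJneg _ hxJ, by simpa using hAsmul (-1) x hxA⟩
  · exact fun a ha x ⟨hxJ, hxA⟩ =>
      ⟨⟨hJl _ _ hxJ, hAmul _ ha _ hxA⟩, ⟨hJr _ _ hxJ, hAmul _ hxA _ ha⟩⟩

theorem eq_univ_of_isBMinimal {A K : Set B} (hA : IsCStarSubalgebra A) (hmin : IsBMinimal A)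
    (hK : IsClosedTwoSidedIdeal K) (hKA : K ∩ A ≠ {0}) : K = Set.univ :=
  Set.eq_univ_of_univ_subset <| hmin _ (isClosedIdealOfSub_inter hA hK) hKA ▸
    closure_span_sandwiches_subset hK Set.inter_subset_left

theorem isBMinimal_of_simple (A : Set B)
    (hsimple : ∀ J : Set B, IsClosedTwoSidedIdeal J → J = {0} ∨ J = Set.univ) :
    IsBMinimal A := by
  intro I hI hI0
  obtain ⟨i, hiI, hi0⟩ : ∃ i ∈ I, i ≠ 0 := by
    by_contra! h
    exact hI0 (Set.eq_singleton_iff_unique_mem.mpr ⟨hI.2.2.1, h⟩)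
  refine (hsimple _ (isClosedTwoSidedIdeal_closure_span_sandwiches I)).resolve_left fun h => ?_
  have hmem : star i * i * star i ∈ closure (Submodule.span ℂ (sandwiches I) : Set B) :=
    subset_closure (Submodule.subset_span ⟨star i, star i, i, hiI, rfl⟩)
  exact star_mul_self_mul_star_ne_zero hi0 (Set.mem_singleton_iff.mp (h ▸ hmem))

theorem detectsIdeals_of_simple {A : Set B} (hA0 : ∃ x ∈ A, x ≠ 0)
    (hsimple : ∀ J : Set B, IsClosedTwoSidedIdeal J → J = {0} ∨ J = Set.univ) :
    DetectsIdeals A := by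
  intro J hJ hJ0
  obtain ⟨x, hxA, hx0⟩ := hA0
  rw [(hsimple J hJ).resolve_left hJ0, Set.univ_inter]
  exact fun hA => hx0 (Set.mem_singleton_iff.mp (hA ▸ hxA))

end CStarInclusion

open CStarInclusion in
/-- (1) `B` is simple iff `A` detects ideals in `B` and `A` is
`B`-minimal.  (2) If `A ⊆ B` has the generalised intersection property with hidden ideal
`N` and `A` is `B`-minimal, then `B/N` is simple: the only closed two-sided ideals
`K ⊇ N` of `B` are `N` and `B`. -/
theorem simplicity_criterion
    {B : Type*} [NonUnitalCStarAlgebra B] (A : Set B)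
    (hA : IsCStarSubalgebra A) (hA0 : ∃ x ∈ A, x ≠ 0) :
    ((∀ J : Set B, IsClosedTwoSidedIdeal J → J = {0} ∨ J = Set.univ) ↔
      (DetectsIdeals A ∧ IsBMinimal A)) ∧
    (∀ N : Set B, IsClosedTwoSidedIdeal N →
      (∀ J : Set B, IsClosedTwoSidedIdeal J → (J ∩ A = {0} ↔ J ⊆ N)) →
      IsBMinimal A →
      ∀ K : Set B, IsClosedTwoSidedIdeal K → N ⊆ K → K = N ∨ K = Set.univ) := by
  refine ⟨⟨fun hsimple =>
    ⟨detectsIdeals_of_simple hA0 hsimple, isBMinimal_of_simple A hsimple⟩,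
    fun ⟨hdet, hmin⟩ J hJ => ?_⟩, fun N _ hgip hmin K hK hNK => ?_⟩
  · by_cases hJ0 : J = {0}
    · exact Or.inl hJ0
    · exact Or.inr (eq_univ_of_isBMinimal hA hmin hJ (hdet J hJ hJ0))
  · by_cases hKA : K ∩ A = {0}
    · exact Or.inl (((hgip K hK).mp hKA).antisymm hNK)
    · exact Or.inr (eq_univ_of_isBMinimal hA hmin hK hKA)
end

section
/- Let B be a commutative C*-algebra and A ⊆ B a nonzero closed *-subalgebra such that the inclusion is non-degenerate, i.e., the closed linear span of {a · b : a ∈ A, b ∈ B} equals B. Then the inclusion A ⊆ B is regular: the set of normalisers N(A,B) := {b ∈ B : b A b* ⊆ A and b* A b ⊆ A} generates B as a C*-algebra, i.e., the smallest closed *-subalgebra of B containing N(A,B) is B itself. -/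
/-- The set of normalisers of `A` in `B`. -/
def Normalisers {B : Type*} [NonUnitalCStarAlgebra B] (A : Set B) : Set B :=
  {b : B | (∀ a ∈ A, b * a * star b ∈ A) ∧ ∀ a ∈ A, star b * a * b ∈ A}

/-! Unitaries span the unitization `B̃ = Unitization ℂ B`, so for `a ∈ A` and `b ∈ B` the product
`a * b` is a linear combination of the elements `a * u ∈ B` with `u` unitary in `B̃`. Since `B` is
commutative, `(a * u) * y * star (a * u) = y * (a * star a) ∈ A` for `y ∈ A`, so each `a * u` is a
normaliser. Hence the normalisers span a subspace containing all `a * b`, which is dense by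
non-degeneracy. -/

open Unitization

lemma IsCStarSubalgebra.span_subset {B : Type*} [NonUnitalCStarAlgebra B] {C s : Set B}
    (hC : IsCStarSubalgebra C) (hs : s ⊆ C) : (Submodule.span ℂ s : Set B) ⊆ C := by
  obtain ⟨-, hzero, hadd, hsmul, -⟩ := hC
  intro x hx
  induction hx using Submodule.span_induction with
  | mem x hx => exact hs hx
  | zero => exact hzero
  | add x y _ _ hx hy => exact hadd x hx y hy
  | smul c x _ hx => exact hsmul c x hx

section

variable {B : Type*} [NonUnitalCommCStarAlgebra B]

lemma mem_normalisers_of_mul_star_self_mem {A : Set B}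
    (hmul : ∀ x ∈ A, ∀ y ∈ A, x * y ∈ A) {b : B} (hb : b * star b ∈ A) :
    b ∈ Normalisers A := by
  refine ⟨fun y hy => ?_, fun y hy => ?_⟩
  · rw [mul_comm b y, mul_assoc]
    exact hmul y hy _ hb
  · rw [mul_comm (star b) y, mul_assoc, mul_comm (star b)]
    exact hmul y hy _ hb

lemma inr_snd_inr_mul (a : B) (x : Unitization ℂ B) :
    ((((a : Unitization ℂ B) * x).snd : B) : Unitization ℂ B) = (a : Unitization ℂ B) * x := by
  ext <;> simp [fst_mul]

lemma snd_inr_mul_mem_normalisers {A : Set B} (hmul : ∀ x ∈ A, ∀ y ∈ A, x * y ∈ A)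
    (hstar : ∀ x ∈ A, star x ∈ A) {a : B} (ha : a ∈ A) {u : Unitization ℂ B}
    (hu : u ∈ unitary (Unitization ℂ B)) :
    ((a : Unitization ℂ B) * u).snd ∈ Normalisers A := by
  refine mem_normalisers_of_mul_star_self_mem hmul ?_
  convert hmul a ha _ (hstar a ha) using 1
  apply inr_injective (R := ℂ)
  rw [inr_mul, inr_star, inr_snd_inr_mul, star_mul, mul_assoc, ← mul_assoc u,
    Unitary.mul_star_self_of_mem hu, one_mul, inr_mul, inr_star]

lemma mul_mem_span_normalisers {A : Set B} (hmul : ∀ x ∈ A, ∀ y ∈ A, x * y ∈ A)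
    (hstar : ∀ x ∈ A, star x ∈ A) {a : B} (ha : a ∈ A) (b : B) :
    a * b ∈ Submodule.span ℂ (Normalisers A) := by
  let L : Unitization ℂ B →ₗ[ℂ] B :=
    sndHom ℂ ℂ B ∘ₗ LinearMap.mulLeft ℂ (a : Unitization ℂ B)
  have hab : a * b = L b := by simp [L]
  have hb : (b : Unitization ℂ B) ∈ Submodule.span ℂ (unitary (Unitization ℂ B) : Set _) := by
    rw [CStarAlgebra.span_unitary]; trivial
  have hLb : L b ∈ Submodule.span ℂ (L '' unitary (Unitization ℂ B)) := by
    rw [Submodule.span_image]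
    exact Submodule.mem_map_of_mem hb
  rw [hab]
  refine Submodule.span_mono ?_ hLb
  rintro _ ⟨u, hu, rfl⟩
  exact snd_inr_mul_mem_normalisers hmul hstar ha hu

end

theorem commutative_inclusion_regular_general
    {B : Type*} [NonUnitalCommCStarAlgebra B] (A : Set B)
    (hA : IsCStarSubalgebra A)
    (hnondeg :
      closure (Submodule.span ℂ {z : B | ∃ a ∈ A, ∃ b : B, z = a * b} : Set B) = Set.univ) :
    ∀ C : Set B, IsCStarSubalgebra C → Normalisers A ⊆ C → C = Set.univ := by
  intro C hC hNC
  obtain ⟨-, -, -, -, hmul, hstar⟩ := hA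
  have hspan : Submodule.span ℂ {z : B | ∃ a ∈ A, ∃ b : B, z = a * b} ≤
      Submodule.span ℂ (Normalisers A) := by
    rw [Submodule.span_le]
    rintro _ ⟨a, ha, b, rfl⟩
    exact mul_mem_span_normalisers hmul hstar ha b
  refine Set.univ_subset_iff.mp (hnondeg ▸ closure_minimal ?_ hC.1)
  exact (SetLike.coe_subset_coe.mpr hspan).trans (hC.span_subset hNC)

/-- A non-degenerate C*-inclusion `A ⊆ B` with `B` commutative is
regular: the smallest closed *-subalgebra of `B` containing the normalisers `N(A,B)` is
`B` itself. -/
theorem commutative_inclusion_regular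
    {B : Type*} [NonUnitalCommCStarAlgebra B] (A : Set B)
    (hA : IsCStarSubalgebra A) (hA0 : ∃ x ∈ A, x ≠ 0)
    (hnondeg :
      closure (Submodule.span ℂ {z : B | ∃ a ∈ A, ∃ b : B, z = a * b} : Set B) = Set.univ) :
    ∀ C : Set B, IsCStarSubalgebra C → Normalisers A ⊆ C → C = Set.univ :=
  commutative_inclusion_regular_general A hA hnondeg
end

section
/- Let A be a C*-algebra and b ∈ A a nonzero positive element. Then b does not satisfy Kishimoto's condition for A viewed as a normed A-bimodule over itself: there exist a hereditary C*-subalgebra D of A and ε > 0 such that ‖a b a‖ ≥ ε for every positive a ∈ D with ‖a‖ = 1. -/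
/-- A hereditary C*-subalgebra of `A`: a nonzero closed *-subalgebra `D` such that
`a ∈ D`, `0 ≤ b ≤ a` imply `b ∈ D`. -/
def IsHereditarySubalgebra {A : Type*} [NonUnitalCStarAlgebra A] [PartialOrder A]
    [StarOrderedRing A] (D : Set A) : Prop :=
  IsClosed D ∧ (∃ x ∈ D, x ≠ 0) ∧ (0 : A) ∈ D ∧
    (∀ x ∈ D, ∀ y ∈ D, x + y ∈ D) ∧ (∀ (c : ℂ), ∀ x ∈ D, c • x ∈ D) ∧
    (∀ x ∈ D, ∀ y ∈ D, x * y ∈ D) ∧ (∀ x ∈ D, star x ∈ D) ∧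
    ∀ a ∈ D, ∀ b : A, 0 ≤ b → b ≤ a → b ∈ D

/-!
Let δ = ‖b‖ / 2 and split b - δ = (b - δ)⁺ - (b - δ)⁻ in the unitization. Take for `D` the
elements of `A` annihilated on both sides by h = (b - δ)⁻. It is hereditary because
0 ≤ y ≤ x and x h = 0 give (√y h)⋆ (√y h) = h⋆ y h ≤ h⋆ x h = 0, and it contains
(b - δ)⁺ ≠ 0. For positive `a ∈ D`, a (b - δ) a = a (b - δ)⁺ a ≥ 0, so a b a ≥ δ a² and
‖a b a‖ ≥ δ ‖a‖².
-/

open Unitization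
open scoped CStarAlgebra

section Annihilator

variable {A : Type*} [NonUnitalCStarAlgebra A] [PartialOrder A] [StarOrderedRing A]

lemma mul_eq_zero_of_le_of_mul_eq_zero {x y g : A} (hy : 0 ≤ y) (hyx : y ≤ x)
    (hxg : x * g = 0) : y * g = 0 := by
  have hconj : star g * y * g = 0 := by
    refine le_antisymm ?_ (star_left_conjugate_nonneg hy g)
    simpa [mul_assoc, hxg] using star_left_conjugate_le_conjugate hyx g
  have hsqrt : CFC.sqrt y * g = 0 := by
    rw [← CStarRing.star_mul_self_eq_zero_iff, star_mul,
      (CFC.sqrt_nonneg y).isSelfAdjoint.star_eq, mul_assoc, ← mul_assoc (CFC.sqrt y),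
      CFC.sqrt_mul_sqrt_self y, ← mul_assoc, hconj]
  rw [← CFC.sqrt_mul_sqrt_self y, mul_assoc, hsqrt, mul_zero]

def unitizationAnnihilator (h : A⁺¹) : Set A := {x | (x : A⁺¹) * h = 0 ∧ h * x = 0}

lemma isHereditarySubalgebra_unitizationAnnihilator {h : A⁺¹} (hh : IsSelfAdjoint h)
    (hne : ∃ x ∈ unitizationAnnihilator h, x ≠ 0) :
    IsHereditarySubalgebra (unitizationAnnihilator h) := by
  refine ⟨?_, hne, by simp [unitizationAnnihilator], ?_, ?_, ?_, ?_, ?_⟩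
  · exact (isClosed_eq (Unitization.continuous_inr.mul continuous_const) continuous_const).inter
      (isClosed_eq (continuous_const.mul Unitization.continuous_inr) continuous_const)
  · rintro x ⟨hx₁, hx₂⟩ y ⟨hy₁, hy₂⟩
    simp [unitizationAnnihilator, add_mul, mul_add, hx₁, hx₂, hy₁, hy₂]
  · rintro c x ⟨hx₁, hx₂⟩
    simp [unitizationAnnihilator, inr_smul, hx₁, hx₂]
  · rintro x ⟨-, hx₂⟩ y ⟨hy₁, -⟩
    simp [unitizationAnnihilator, inr_mul, mul_assoc, hy₁, ← mul_assoc h, hx₂]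
  · rintro x ⟨hx₁, hx₂⟩
    refine ⟨?_, ?_⟩
    · rw [inr_star, ← hh.star_eq, ← star_mul, hx₂, star_zero]
    · rw [inr_star, ← hh.star_eq, ← star_mul, hx₁, star_zero]
  · rintro x ⟨hx₁, -⟩ y hy hyx
    have hy₁ : (y : A⁺¹) * h = 0 :=
      mul_eq_zero_of_le_of_mul_eq_zero (inr_nonneg_iff.mpr hy)
        ((inr_le_iff y x hy.isSelfAdjoint (hy.trans hyx).isSelfAdjoint).mpr hyx) hx₁
    refine ⟨hy₁, ?_⟩
    rw [← hh.star_eq, ← (isSelfAdjoint_inr.mpr hy.isSelfAdjoint).star_eq, ← star_mul, hy₁,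
      star_zero]

end Annihilator

section Unital

variable {B : Type*} [CStarAlgebra B]

lemma cfc_posPart_sub_mul_cfc_negPart_sub (δ : ℝ) (b : B) :
    cfc (fun t : ℝ => max (t - δ) 0) b * cfc (fun t : ℝ => max (δ - t) 0) b = 0 := by
  rw [← cfc_mul .., ← cfc_const_zero ℝ b]
  refine cfc_congr fun t _ => ?_
  rcases le_total t δ with h | h <;> simp [h]

lemma cfc_posPart_sub_sub_cfc_negPart_sub (δ : ℝ) {b : B} (hb : IsSelfAdjoint b) :
    cfc (fun t : ℝ => max (t - δ) 0) b - cfc (fun t : ℝ => max (δ - t) 0) b =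
      b - algebraMap ℝ B δ := by
  have hsub : cfc (fun t : ℝ => t - δ) b = b - algebraMap ℝ B δ := by
    rw [cfc_sub (fun t : ℝ => t) (fun _ => δ) b, cfc_id' ℝ b, cfc_const δ b]
  rw [← hsub, ← cfc_sub ..]
  refine cfc_congr fun t _ => ?_
  rcases le_total t δ with h | h <;> simp [h]

variable [PartialOrder B] [StarOrderedRing B]

lemma cfc_posPart_sub_ne_zero [Nontrivial B] {δ : ℝ} {b : B} (hb : 0 ≤ b) (hδ : δ < ‖b‖) :
    cfc (fun t : ℝ => max (t - δ) 0) b ≠ 0 := by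
  intro h
  have hmem := Set.mem_image_of_mem (fun t : ℝ => max (t - δ) 0)
    (CStarAlgebra.norm_mem_spectrum_of_nonneg hb)
  rw [← cfc_map_spectrum .., h, spectrum.zero_eq, Set.mem_singleton_iff, max_eq_right_iff,
    sub_nonpos] at hmem
  exact hδ.not_ge hmem

lemma smul_mul_self_le_mul_mul_of_mul_cfc_negPart_sub {δ : ℝ} {a b : B} (ha : IsSelfAdjoint a)
    (hb : IsSelfAdjoint b) (hab : a * cfc (fun t : ℝ => max (δ - t) 0) b = 0) :
    δ • (a * a) ≤ a * b * a := by
  rw [← sub_nonneg]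
  have key : a * b * a - δ • (a * a) = star a * cfc (fun t : ℝ => max (t - δ) 0) b * a := by
    calc a * b * a - δ • (a * a) = a * (b - algebraMap ℝ B δ) * a := by
          rw [Algebra.algebraMap_eq_smul_one, mul_sub, sub_mul, mul_smul_one, smul_mul_assoc]
      _ = a * cfc (fun t : ℝ => max (t - δ) 0) b * a -
            a * cfc (fun t : ℝ => max (δ - t) 0) b * a := by
          rw [← cfc_posPart_sub_sub_cfc_negPart_sub δ hb, mul_sub, sub_mul]
      _ = star a * cfc (fun t : ℝ => max (t - δ) 0) b * a := by
          rw [hab, zero_mul, sub_zero, ha.star_eq]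
  rw [key]
  exact star_left_conjugate_nonneg (cfc_nonneg fun t _ => le_max_right _ _) a

lemma mul_norm_sq_le_norm_mul_mul_of_mul_cfc_negPart_sub
    {δ : ℝ} (hδ : 0 ≤ δ) {a b : B} (ha : IsSelfAdjoint a) (hb : IsSelfAdjoint b)
    (hab : a * cfc (fun t : ℝ => max (δ - t) 0) b = 0) :
    δ * ‖a‖ ^ 2 ≤ ‖a * b * a‖ :=
  calc δ * ‖a‖ ^ 2 = ‖δ • (a * a)‖ := by
        rw [norm_smul, ha.norm_mul_self, Real.norm_of_nonneg hδ, sq]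
    _ ≤ ‖a * b * a‖ := CStarAlgebra.norm_le_norm_of_nonneg_of_le
        (smul_nonneg hδ ha.mul_self_nonneg)
        (smul_mul_self_le_mul_mul_of_mul_cfc_negPart_sub ha hb hab)

end Unital

/-- No nonzero positive element `b` of a C*-algebra `A` satisfies
Kishimoto's condition for `A` viewed as a bimodule over itself: there are a hereditary
C*-subalgebra `D ⊆ A` and `ε > 0` with `‖a b a‖ ≥ ε` for every positive `a ∈ D` of
norm one. -/
theorem no_positive_element_satisfies_Kishimoto
    {A : Type*} [NonUnitalCStarAlgebra A] [PartialOrder A] [StarOrderedRing A]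
    (b : A) (hb : 0 ≤ b) (hb0 : b ≠ 0) :
    ∃ (D : Set A) (ε : ℝ), IsHereditarySubalgebra D ∧ 0 < ε ∧
      ∀ a ∈ D, 0 ≤ a → ‖a‖ = 1 → ε ≤ ‖a * b * a‖ := by
  set δ := ‖b‖ / 2
  have hδ : 0 < δ := half_pos (norm_pos_iff.mpr hb0)
  have hb' : 0 ≤ (b : A⁺¹) := inr_nonneg_iff.mpr hb
  set h : A⁺¹ := cfc (fun t : ℝ => max (δ - t) 0) (b : A⁺¹)
  set f : A := cfcₙ (fun t : ℝ => max (t - δ) 0) b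
  have hf : (f : A⁺¹) = cfc (fun t : ℝ => max (t - δ) 0) (b : A⁺¹) :=
    real_cfcₙ_eq_cfc_inr b _ (by simp [hδ.le])
  have hfh : (f : A⁺¹) * h = 0 := hf ▸ cfc_posPart_sub_mul_cfc_negPart_sub δ _
  have hf0 : f ≠ 0 := fun hf0 => cfc_posPart_sub_ne_zero hb'
    (by rw [norm_inr]; exact half_lt_self (norm_pos_iff.mpr hb0)) (by rw [← hf, hf0, inr_zero])
  refine ⟨unitizationAnnihilator h, δ, isHereditarySubalgebra_unitizationAnnihilator
    (cfc_predicate _ _) ⟨f, ⟨hfh, ?_⟩, hf0⟩, hδ, fun a ha ha0 ha1 => ?_⟩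
  · rw [← (hf ▸ cfc_commute_cfc _ _ _ : Commute (f : A⁺¹) h).eq, hfh]
  · simpa [← inr_mul, norm_inr, ha1] using
      mul_norm_sq_le_norm_mul_mul_of_mul_cfc_negPart_sub hδ.le
        (isSelfAdjoint_inr.mpr ha0.isSelfAdjoint) hb'.isSelfAdjoint ha.1
end

section
/- Let A be a C*-algebra and X a normed A-bimodule. Then the set of all x ∈ X satisfying Kishimoto's condition is a closed complex linear subspace of X. -/
/-- Kishimoto's condition for an element `x` of a normed `A`-bimodule `X`, whose left and
right module actions are given by the bilinear maps `L` and `R`. -/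
def KishimotoCondition {A X : Type*} [NonUnitalCStarAlgebra A] [PartialOrder A]
    [StarOrderedRing A] [NormedAddCommGroup X] [NormedSpace ℂ X]
    (L R : A →ₗ[ℂ] X →ₗ[ℂ] X) (x : X) : Prop :=
  ∀ D : Set A, IsHereditarySubalgebra D → ∀ ε : ℝ, 0 < ε →
    ∃ a ∈ D, 0 ≤ a ∧ ‖a‖ = 1 ∧ ‖L a (R a x)‖ < ε

/-!
Closedness, `0` and scalar multiples are immediate. For a sum `x + y` and a hereditary
subalgebra `D`, first choose `a ∈ D` with `‖a x a‖` small. With `e = g(a)` for a continuous `g`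
vanishing on `[0, 1/4]` and equal to `1` on `[1/2, ∞)`, the elements `b ∈ D` with
`b e = e b = b` form a hereditary subalgebra `D'`; it is nonzero because it contains
`(a - 1/2)₊`, which is nonzero as `‖a‖ = 1`. Since `e = k a = a k` with `‖k‖ ≤ 4`, every
`b ∈ D'` satisfies `b x b = b k (a x a) k b`, so `‖b x b‖ ≤ 16 ‖b‖² ‖a x a‖`. Choosing
`b ∈ D'` for `y` therefore handles `x` and `y` at the same time.
-/

namespace Kishimoto

noncomputable def ramp (t : ℝ) : ℝ := min 1 (max (4 * t - 1) 0)

/-- Equal to `ramp t / t`, as `ramp` vanishes on `(-∞, 1/4]`; the `max` keeps it continuous. -/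
noncomputable def rampQuot (t : ℝ) : ℝ := ramp t / max t 4⁻¹

noncomputable def cutoff (t : ℝ) : ℝ := max (t - 1 / 2) 0

@[fun_prop]
lemma continuous_ramp : Continuous ramp := by unfold ramp; fun_prop

@[fun_prop]
lemma continuous_rampQuot : Continuous rampQuot :=
  continuous_ramp.div (by fun_prop) fun t => (lt_max_of_lt_right (by norm_num)).ne'

@[fun_prop]
lemma continuous_cutoff : Continuous cutoff := by unfold cutoff; fun_prop

@[simp]
lemma ramp_zero : ramp 0 = 0 := by norm_num [ramp]

@[simp]
lemma rampQuot_zero : rampQuot 0 = 0 := by simp [rampQuot]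

@[simp]
lemma cutoff_zero : cutoff 0 = 0 := by norm_num [cutoff]

lemma ramp_eq_zero {t : ℝ} (ht : t ≤ 4⁻¹) : ramp t = 0 := by
  rw [ramp, max_eq_right (by linarith)]; norm_num

lemma mul_rampQuot (t : ℝ) : t * rampQuot t = ramp t := by
  rcases le_or_gt t 4⁻¹ with ht | ht
  · simp [rampQuot, ramp_eq_zero ht]
  · rw [rampQuot, max_eq_left ht.le, mul_div_cancel₀ _ (by positivity)]

lemma ramp_nonneg (t : ℝ) : 0 ≤ ramp t := le_min zero_le_one (le_max_right _ _)

lemma ramp_le_one (t : ℝ) : ramp t ≤ 1 := min_le_left _ _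

lemma abs_rampQuot_le (t : ℝ) : |rampQuot t| ≤ 4 := by
  have hmax : (4 : ℝ)⁻¹ ≤ max t 4⁻¹ := le_max_right _ _
  rw [rampQuot, abs_of_nonneg (div_nonneg (ramp_nonneg t) (by positivity)),
    div_le_iff₀ (by positivity)]
  linarith [ramp_le_one t]

lemma ramp_mul_cutoff (t : ℝ) : ramp t * cutoff t = cutoff t := by
  rcases le_or_gt t (1 / 2) with ht | ht
  · rw [cutoff, max_eq_right (by linarith), mul_zero]
  · rw [ramp, min_eq_left (le_max_of_le_left (by linarith)), one_mul]

lemma cutoff_nonneg (t : ℝ) : 0 ≤ cutoff t := le_max_right _ _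

lemma cutoff_le_self {t : ℝ} (ht : 0 ≤ t) : cutoff t ≤ t := max_le (by linarith) ht

lemma abs_sub_cutoff_le {t : ℝ} (ht : 0 ≤ t) : |t - cutoff t| ≤ 1 / 2 := by
  rw [abs_of_nonneg (sub_nonneg.mpr (cutoff_le_self ht))]
  unfold cutoff
  rcases le_total t (1 / 2) with h | h
  · rw [max_eq_right (by linarith)]; linarith
  · rw [max_eq_left (by linarith)]; linarith

end Kishimoto

open Kishimoto

section CStarAlgebra

variable {A : Type*} [NonUnitalCStarAlgebra A] [PartialOrder A] [StarOrderedRing A]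

lemma star_sqrt_sub_mul_mul_sqrt_sub_mul {e z : A} (he : IsSelfAdjoint e) (hz : 0 ≤ z) :
    star (CFC.sqrt z - CFC.sqrt z * e) * (CFC.sqrt z - CFC.sqrt z * e)
      = z - e * z - z * e + e * z * e := by
  have hs : IsSelfAdjoint (CFC.sqrt z) := .of_nonneg (CFC.sqrt_nonneg z)
  generalize hsz : CFC.sqrt z = s at hs
  rw [← CFC.sqrt_mul_sqrt_self z, hsz]
  simp only [star_sub, star_mul, hs.star_eq, he.star_eq]
  noncomm_ring

/-- The compression of `b` by `1 - e` is squeezed between `0` and that of `d`, which vanishes. -/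
lemma mul_eq_self_of_le {e b d : A} (he : IsSelfAdjoint e) (hb : 0 ≤ b) (hbd : b ≤ d)
    (hed : e * d = d) (hde : d * e = d) : b * e = b := by
  set p := CFC.sqrt b - CFC.sqrt b * e
  set r := CFC.sqrt (d - b) - CFC.sqrt (d - b) * e
  have hsum : star p * p + star r * r = 0 := by
    rw [star_sqrt_sub_mul_mul_sqrt_sub_mul he hb,
      star_sqrt_sub_mul_mul_sqrt_sub_mul he (sub_nonneg.mpr hbd)]
    simp only [mul_sub, sub_mul, hed, hde]
    noncomm_ring
  have hp : p = 0 := (CStarRing.star_mul_self_eq_zero_iff p).mp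
    ((add_eq_zero_iff_of_nonneg (star_mul_self_nonneg p) (star_mul_self_nonneg r)).mp hsum).1
  calc b * e = CFC.sqrt b * (CFC.sqrt b * e) := by rw [← mul_assoc, CFC.sqrt_mul_sqrt_self b]
    _ = b := by rw [← sub_eq_zero.mp hp, CFC.sqrt_mul_sqrt_self b]

def corner (e : A) : Set A := {b | e * b = b ∧ b * e = b}

lemma isHereditarySubalgebra_corner {e : A} (he : IsSelfAdjoint e)
    (hne : ∃ b ∈ corner e, b ≠ 0) : IsHereditarySubalgebra (corner e) := by
  refine ⟨?_, hne, ⟨mul_zero e, zero_mul e⟩, fun x hx y hy => ?_, fun c x hx => ?_,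
    fun x hx y hy => ?_, fun x hx => ?_, fun d hd b hb hbd => ?_⟩
  · exact (isClosed_eq (continuous_const_mul e) continuous_id).inter
      (isClosed_eq (continuous_mul_const e) continuous_id)
  · exact ⟨by rw [mul_add, hx.1, hy.1], by rw [add_mul, hx.2, hy.2]⟩
  · exact ⟨by rw [mul_smul_comm, hx.1], by rw [smul_mul_assoc, hx.2]⟩
  · exact ⟨by rw [← mul_assoc, hx.1], by rw [mul_assoc, hy.2]⟩
  · exact ⟨by simpa [he.star_eq] using congrArg star hx.2,
      by simpa [he.star_eq] using congrArg star hx.1⟩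
  · have hbe : b * e = b := mul_eq_self_of_le he hb hbd hd.1 hd.2
    have hsa : IsSelfAdjoint b := .of_nonneg hb
    exact ⟨by simpa [he.star_eq, hsa.star_eq] using congrArg star hbe, hbe⟩

lemma IsHereditarySubalgebra.inter {D E : Set A} (hD : IsHereditarySubalgebra D)
    (hE : IsHereditarySubalgebra E) (hne : ∃ x ∈ D ∩ E, x ≠ 0) :
    IsHereditarySubalgebra (D ∩ E) := by
  obtain ⟨hDc, -, hD0, hDadd, hDsmul, hDmul, hDstar, hDher⟩ := hD
  obtain ⟨hEc, -, hE0, hEadd, hEsmul, hEmul, hEstar, hEher⟩ := hE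
  exact ⟨hDc.inter hEc, hne, ⟨hD0, hE0⟩,
    fun x hx y hy => ⟨hDadd x hx.1 y hy.1, hEadd x hx.2 y hy.2⟩,
    fun c x hx => ⟨hDsmul c x hx.1, hEsmul c x hx.2⟩,
    fun x hx y hy => ⟨hDmul x hx.1 y hy.1, hEmul x hx.2 y hy.2⟩,
    fun x hx => ⟨hDstar x hx.1, hEstar x hx.2⟩,
    fun a ha b hb hba => ⟨hDher a ha.1 b hb hba, hEher a ha.2 b hb hba⟩⟩

lemma IsHereditarySubalgebra.exists_nonneg_norm_eq_one {D : Set A}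
    (hD : IsHereditarySubalgebra D) : ∃ u ∈ D, 0 ≤ u ∧ ‖u‖ = 1 := by
  obtain ⟨-, ⟨x, hxD, hx⟩, -, -, hsmul, hmul, hstar, -⟩ := hD
  have hn : ‖star x * x‖ ≠ 0 := by
    rw [CStarRing.norm_star_mul_self]
    exact mul_ne_zero (norm_ne_zero_iff.mpr hx) (norm_ne_zero_iff.mpr hx)
  refine ⟨((‖star x * x‖⁻¹ : ℝ) : ℂ) • (star x * x), hsmul _ _ (hmul _ (hstar x hxD) _ hxD),
    ?_, ?_⟩
  · rw [Complex.coe_smul]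
    exact smul_nonneg (by positivity) (star_mul_self_nonneg x)
  · rw [norm_smul, Complex.norm_real, Real.norm_eq_abs, abs_of_nonneg (by positivity),
      inv_mul_cancel₀ hn]

lemma cfcₙ_cutoff_ne_zero {a : A} (ha : 0 ≤ a) (han : ‖a‖ = 1) : cfcₙ cutoff a ≠ 0 := by
  intro hc
  have hle : ‖a - cfcₙ cutoff a‖ ≤ 1 / 2 := by
    have : a - cfcₙ cutoff a = cfcₙ (fun t => t - cutoff t) a := by
      rw [cfcₙ_sub _ _ a, cfcₙ_id' ℝ a]
    rw [this]
    refine norm_cfcₙ_le fun t ht => ?_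
    rw [Real.norm_eq_abs]
    exact abs_sub_cutoff_le (quasispectrum_nonneg_of_nonneg a ha t ht)
  rw [hc, sub_zero, han] at hle
  norm_num at hle

lemma cfcₙ_cutoff_mem {D : Set A} (hD : IsHereditarySubalgebra D) {a : A} (haD : a ∈ D)
    (ha : 0 ≤ a) : cfcₙ cutoff a ∈ D := by
  obtain ⟨-, -, -, -, -, -, -, hher⟩ := hD
  refine hher a haD _ (cfcₙ_nonneg fun t _ => cutoff_nonneg t) ?_
  conv_rhs => rw [← cfcₙ_id' ℝ a]
  exact cfcₙ_mono fun t ht => cutoff_le_self (quasispectrum_nonneg_of_nonneg a ha t ht)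

lemma exists_hereditarySubalgebra_subset_mul_eq {D : Set A} (hD : IsHereditarySubalgebra D)
    {a : A} (haD : a ∈ D) (ha : 0 ≤ a) (han : ‖a‖ = 1) :
    ∃ D' ⊆ D, IsHereditarySubalgebra D' ∧
      ∃ k : A, ‖k‖ ≤ 4 ∧ ∀ b ∈ D', b * (k * a) = b ∧ a * k * b = b := by
  have hak : a * cfcₙ rampQuot a = cfcₙ ramp a := by
    conv_rhs => rw [show ramp = fun t => t * rampQuot t from funext fun t => (mul_rampQuot t).symm]
    rw [cfcₙ_mul (fun t => t) rampQuot a, cfcₙ_id' ℝ a]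
  have hka : cfcₙ rampQuot a * a = cfcₙ ramp a := by
    conv_rhs => rw [show ramp = fun t => rampQuot t * t from
      funext fun t => by rw [mul_comm, mul_rampQuot]]
    rw [cfcₙ_mul rampQuot (fun t => t) a, cfcₙ_id' ℝ a]
  have hcorner : cfcₙ cutoff a ∈ corner (cfcₙ ramp a) := by
    constructor
    · rw [← cfcₙ_mul ramp cutoff a]
      simp only [ramp_mul_cutoff]
    · rw [← cfcₙ_mul cutoff ramp a]
      simp only [mul_comm (cutoff _), ramp_mul_cutoff]
  refine ⟨D ∩ corner (cfcₙ ramp a), Set.inter_subset_left,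
    hD.inter (isHereditarySubalgebra_corner .cfcₙ ⟨_, hcorner, cfcₙ_cutoff_ne_zero ha han⟩)
      ⟨_, ⟨cfcₙ_cutoff_mem hD haD ha, hcorner⟩, cfcₙ_cutoff_ne_zero ha han⟩,
    cfcₙ rampQuot a, norm_cfcₙ_le fun t _ => abs_rampQuot_le t, fun b hb => ?_⟩
  rw [hka, hak]
  exact ⟨hb.2.2, hb.2.1⟩

end CStarAlgebra

section Bimodule

variable {A X : Type*} [NonUnitalCStarAlgebra A] [NormedAddCommGroup X] [NormedSpace ℂ X]
  {L R : A →ₗ[ℂ] X →ₗ[ℂ] X}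

lemma norm_sandwich_le (hLnorm : ∀ (a : A) (x : X), ‖L a x‖ ≤ ‖a‖ * ‖x‖)
    (hRnorm : ∀ (a : A) (x : X), ‖R a x‖ ≤ ‖x‖ * ‖a‖) (a b : A) (x : X) :
    ‖L a (R b x)‖ ≤ ‖a‖ * ‖b‖ * ‖x‖ :=
  calc ‖L a (R b x)‖ ≤ ‖a‖ * (‖x‖ * ‖b‖) :=
        (hLnorm a _).trans (mul_le_mul_of_nonneg_left (hRnorm b x) (norm_nonneg a))
    _ = ‖a‖ * ‖b‖ * ‖x‖ := by ring

lemma norm_sandwich_le_of_mul_eq (hL : ∀ (a b : A) (x : X), L (a * b) x = L a (L b x))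
    (hR : ∀ (a b : A) (x : X), R (a * b) x = R b (R a x))
    (hLR : ∀ (a b : A) (x : X), L a (R b x) = R b (L a x))
    (hLnorm : ∀ (a : A) (x : X), ‖L a x‖ ≤ ‖a‖ * ‖x‖)
    (hRnorm : ∀ (a : A) (x : X), ‖R a x‖ ≤ ‖x‖ * ‖a‖) {a b k : A}
    (hr : b * (k * a) = b) (hl : a * k * b = b) (x : X) :
    ‖L b (R b x)‖ ≤ (‖b‖ * ‖k‖) ^ 2 * ‖L a (R a x)‖ := by
  have hfac : L b (R b x) = L b (R b (L k (R k (L a (R a x))))) :=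
    calc L b (R b x) = L (b * (k * a)) (R (a * k * b) x) := by rw [hr, hl]
      _ = L b (R b (L k (R k (L a (R a x))))) := by
        rw [hL, hL, hR, hR, hLR a, hLR a, hLR k b]
  calc ‖L b (R b x)‖ ≤ ‖b‖ * ‖b‖ * (‖k‖ * ‖k‖ * ‖L a (R a x)‖) := by
        rw [hfac]
        exact (norm_sandwich_le hLnorm hRnorm _ _ _).trans
          (mul_le_mul_of_nonneg_left (norm_sandwich_le hLnorm hRnorm _ _ _) (by positivity))
    _ = (‖b‖ * ‖k‖) ^ 2 * ‖L a (R a x)‖ := by ring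

end Bimodule

section KishimotoCondition

variable {A X : Type*} [NonUnitalCStarAlgebra A] [PartialOrder A] [StarOrderedRing A]
  [NormedAddCommGroup X] [NormedSpace ℂ X] {L R : A →ₗ[ℂ] X →ₗ[ℂ] X}

lemma kishimotoCondition_zero : KishimotoCondition L R 0 := by
  intro D hD ε hε
  obtain ⟨u, huD, hu, hun⟩ := hD.exists_nonneg_norm_eq_one
  exact ⟨u, huD, hu, hun, by simpa using hε⟩

lemma KishimotoCondition.smul {x : X} (hx : KishimotoCondition L R x) (c : ℂ) :
    KishimotoCondition L R (c • x) := by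
  intro D hD ε hε
  obtain ⟨a, haD, ha, han, hax⟩ := hx D hD (ε / (‖c‖ + 1)) (by positivity)
  refine ⟨a, haD, ha, han, ?_⟩
  rw [map_smul, map_smul, norm_smul]
  calc ‖c‖ * ‖L a (R a x)‖ ≤ ‖c‖ * (ε / (‖c‖ + 1)) := by gcongr
    _ < ε := by
      rw [mul_div_assoc', div_lt_iff₀ (by positivity)]
      linarith

lemma KishimotoCondition.add (hL : ∀ (a b : A) (x : X), L (a * b) x = L a (L b x))
    (hR : ∀ (a b : A) (x : X), R (a * b) x = R b (R a x))
    (hLR : ∀ (a b : A) (x : X), L a (R b x) = R b (L a x))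
    (hLnorm : ∀ (a : A) (x : X), ‖L a x‖ ≤ ‖a‖ * ‖x‖)
    (hRnorm : ∀ (a : A) (x : X), ‖R a x‖ ≤ ‖x‖ * ‖a‖) {x y : X}
    (hx : KishimotoCondition L R x) (hy : KishimotoCondition L R y) :
    KishimotoCondition L R (x + y) := by
  intro D hD ε hε
  obtain ⟨a, haD, ha, han, hax⟩ := hx D hD (ε / 32) (by positivity)
  obtain ⟨D', hD'D, hD', k, hk, hmul⟩ := exists_hereditarySubalgebra_subset_mul_eq hD haD ha han
  obtain ⟨b, hbD', hb, hbn, hby⟩ := hy D' hD' (ε / 2) (by positivity)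
  have hbx : ‖L b (R b x)‖ ≤ 16 * ‖L a (R a x)‖ :=
    calc ‖L b (R b x)‖ ≤ (‖b‖ * ‖k‖) ^ 2 * ‖L a (R a x)‖ :=
          norm_sandwich_le_of_mul_eq hL hR hLR hLnorm hRnorm (hmul b hbD').1 (hmul b hbD').2 x
      _ ≤ 4 ^ 2 * ‖L a (R a x)‖ := by rw [hbn, one_mul]; gcongr
      _ = 16 * ‖L a (R a x)‖ := by norm_num
  refine ⟨b, hD'D hbD', hb, hbn, ?_⟩
  rw [map_add, map_add]
  linarith [norm_add_le (L b (R b x)) (L b (R b y))]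

lemma isClosed_setOf_kishimotoCondition (hLnorm : ∀ (a : A) (x : X), ‖L a x‖ ≤ ‖a‖ * ‖x‖)
    (hRnorm : ∀ (a : A) (x : X), ‖R a x‖ ≤ ‖x‖ * ‖a‖) :
    IsClosed {x : X | KishimotoCondition L R x} := by
  refine isClosed_of_closure_subset fun x hx D hD ε hε => ?_
  obtain ⟨x', hx', hxx'⟩ := Metric.mem_closure_iff.mp hx (ε / 2) (by positivity)
  obtain ⟨a, haD, ha, han, hax'⟩ := hx' D hD (ε / 2) (by positivity)
  refine ⟨a, haD, ha, han, ?_⟩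
  have hdiff : ‖L a (R a (x - x'))‖ ≤ ‖x - x'‖ := by
    simpa [han] using norm_sandwich_le hLnorm hRnorm a a (x - x')
  rw [dist_eq_norm] at hxx'
  calc ‖L a (R a x)‖ = ‖L a (R a (x - x')) + L a (R a x')‖ := by simp
    _ ≤ ‖L a (R a (x - x'))‖ + ‖L a (R a x')‖ := norm_add_le _ _
    _ < ε := by linarith

end KishimotoCondition

/-- For a normed `A`-bimodule `X` (left action `L`, right action `R`,
commuting, contractive), the set of elements satisfying Kishimoto's condition is a closed
complex linear subspace of `X`. -/
theorem kishimoto_set_closed_subspace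
    {A X : Type*} [NonUnitalCStarAlgebra A] [PartialOrder A] [StarOrderedRing A]
    [NormedAddCommGroup X] [NormedSpace ℂ X]
    (L R : A →ₗ[ℂ] X →ₗ[ℂ] X)
    (hL : ∀ (a b : A) (x : X), L (a * b) x = L a (L b x))
    (hR : ∀ (a b : A) (x : X), R (a * b) x = R b (R a x))
    (hLR : ∀ (a b : A) (x : X), L a (R b x) = R b (L a x))
    (hLnorm : ∀ (a : A) (x : X), ‖L a x‖ ≤ ‖a‖ * ‖x‖)
    (hRnorm : ∀ (a : A) (x : X), ‖R a x‖ ≤ ‖x‖ * ‖a‖) :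
    IsClosed {x : X | KishimotoCondition L R x} ∧
    (0 : X) ∈ {x : X | KishimotoCondition L R x} ∧
    (∀ x ∈ {x : X | KishimotoCondition L R x}, ∀ y ∈ {x : X | KishimotoCondition L R x},
      x + y ∈ {x : X | KishimotoCondition L R x}) ∧
    (∀ (c : ℂ), ∀ x ∈ {x : X | KishimotoCondition L R x},
      c • x ∈ {x : X | KishimotoCondition L R x}) :=
  ⟨isClosed_setOf_kishimotoCondition hLnorm hRnorm, kishimotoCondition_zero,
    fun _ hx _ hy => hx.add hL hR hLR hLnorm hRnorm hy, fun c _ hx => hx.smul c⟩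
end

section
/- Let E : B → Ã ⊇ A be a generalised expectation for a C*-inclusion A ⊆ B. Suppose that for every positive b ∈ B with E(b) ≠ 0 there is a nonzero positive a ∈ A with a ≤ E(b) in Ã. Then E is supportive: for every positive b ∈ B with E(b) ≠ 0 there are δ > 0 and a hereditary C*-subalgebra D of A such that ‖x E(b) x‖ ≥ δ for every positive x ∈ D with ‖x‖ = 1. -/
/-- A square matrix over a C*-algebra is positive iff it is of the form `yᴴ * y`. -/
def MatrixIsPositive {B : Type*} [NonUnitalCStarAlgebra B] {n : ℕ}
    (M : Matrix (Fin n) (Fin n) B) : Prop :=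
  ∃ y : Matrix (Fin n) (Fin n) B, M = y.conjTranspose * y

/-- A linear map between C*-algebras is completely positive if all the induced entrywise
maps between matrix algebras preserve positivity. -/
def CompletelyPositive {B C : Type*} [NonUnitalCStarAlgebra B] [NonUnitalCStarAlgebra C]
    (E : B →ₗ[ℂ] C) : Prop :=
  ∀ (n : ℕ) (M : Matrix (Fin n) (Fin n) B),
    MatrixIsPositive M → MatrixIsPositive (M.map ⇑E)

/-!
Cut a nonzero positive `a ≤ E b` at height `ε = ‖a‖ / 2`: with `m = min(a, ε)` (functional
calculus), the elements `z` with `z m = m z = ε z` form a hereditary C*-subalgebra `D`,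
nonzero because it contains `a - m = (a - ε)₊`. For positive `x ∈ D` of norm one,
`x a x = ε x² + x (a - m) x ≥ ε x²`, so `‖x E(b) x‖ ≥ ‖x a x‖ ≥ ε`.
-/

/-- The corner `p A p` for the spectral projection `p` of a self-adjoint `m` at `r`, which need
not lie in `A`. -/
def eigenCorner {A : Type*} [NonUnitalRing A] [Module ℝ A] (m : A) (r : ℝ) : Set A :=
  {z | z * m = r • z ∧ m * z = r • z}

namespace eigenCorner

variable {A : Type*} [NonUnitalCStarAlgebra A] {m : A} {r : ℝ}

lemma isClosed (m : A) (r : ℝ) : IsClosed (eigenCorner m r) :=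
  (isClosed_eq (by fun_prop) (by fun_prop)).inter (isClosed_eq (by fun_prop) (by fun_prop))

lemma zero_mem (m : A) (r : ℝ) : (0 : A) ∈ eigenCorner m r := by
  simp [eigenCorner]

lemma add_mem {x y : A} (hx : x ∈ eigenCorner m r) (hy : y ∈ eigenCorner m r) :
    x + y ∈ eigenCorner m r :=
  ⟨by rw [add_mul, hx.1, hy.1, smul_add], by rw [mul_add, hx.2, hy.2, smul_add]⟩

lemma smul_mem (c : ℂ) {x : A} (hx : x ∈ eigenCorner m r) : c • x ∈ eigenCorner m r :=
  ⟨by rw [smul_mul_assoc, hx.1, smul_comm], by rw [mul_smul_comm, hx.2, smul_comm]⟩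

lemma mul_mem {x y : A} (hx : x ∈ eigenCorner m r) (hy : y ∈ eigenCorner m r) :
    x * y ∈ eigenCorner m r :=
  ⟨by rw [mul_assoc, hy.1, mul_smul_comm], by rw [← mul_assoc, hx.2, smul_mul_assoc]⟩

lemma star_mem (hm : IsSelfAdjoint m) {x : A} (hx : x ∈ eigenCorner m r) :
    star x ∈ eigenCorner m r := by
  constructor
  · simpa [hm.star_eq] using congrArg star hx.2
  · simpa [hm.star_eq] using congrArg star hx.1

/-- `(m - r) y (m - r)`, written without the unit. -/
private noncomputable def sandwich (m : A) (r : ℝ) (y : A) : A :=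
  m * y * m - r • (m * y + y * m) + r ^ 2 • y

private lemma sandwich_star_mul_self (hm : IsSelfAdjoint m) (s : A) :
    sandwich m r (star s * s) = star (s * m - r • s) * (s * m - r • s) := by
  simp only [sandwich, star_sub, star_mul, star_smul, star_trivial, hm.star_eq, sub_mul,
    mul_sub, smul_mul_assoc, mul_smul_comm, smul_smul, mul_assoc, smul_add, smul_sub]
  module

private lemma sandwich_eq_zero {z : A} (hz : z ∈ eigenCorner m r) : sandwich m r z = 0 := by
  simp only [sandwich, hz.1, hz.2, smul_mul_assoc, smul_add, smul_smul]
  module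

private lemma sandwich_sub (m : A) (r : ℝ) (y z : A) :
    sandwich m r (y - z) = sandwich m r y - sandwich m r z := by
  simp only [sandwich, mul_sub, sub_mul, smul_sub, smul_add]
  abel

variable [PartialOrder A] [StarOrderedRing A]

private lemma sandwich_nonneg (hm : IsSelfAdjoint m) {y : A} (hy : 0 ≤ y) :
    0 ≤ sandwich m r y := by
  obtain ⟨s, rfl⟩ := CStarAlgebra.nonneg_iff_eq_star_mul_self.mp hy
  rw [sandwich_star_mul_self hm]
  exact star_mul_self_nonneg _

/-- Heredity: from `0 ≤ b ≤ z` the positive map `(m - r) · (m - r)` kills `b` as it kills `z`,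
and then `b = s⋆ s` with `s (m - r) = 0`. -/
lemma mem_of_nonneg_of_le (hm : IsSelfAdjoint m) {z b : A} (hz : z ∈ eigenCorner m r)
    (hb : 0 ≤ b) (hbz : b ≤ z) : b ∈ eigenCorner m r := by
  have hb0 : sandwich m r b = 0 := by
    refine le_antisymm ?_ (sandwich_nonneg hm hb)
    have h := sandwich_nonneg (r := r) hm (sub_nonneg.mpr hbz)
    rwa [sandwich_sub, sandwich_eq_zero hz, zero_sub, neg_nonneg] at h
  obtain ⟨s, rfl⟩ := CStarAlgebra.nonneg_iff_eq_star_mul_self.mp hb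
  rw [sandwich_star_mul_self hm, CStarRing.star_mul_self_eq_zero_iff, sub_eq_zero] at hb0
  refine ⟨by rw [mul_assoc, hb0, mul_smul_comm], ?_⟩
  rw [← mul_assoc, ← hm.star_eq, ← star_mul, hb0, star_smul, star_trivial, smul_mul_assoc]

lemma isHereditarySubalgebra (hm : IsSelfAdjoint m) {k : A} (hk : k ∈ eigenCorner m r)
    (hk0 : k ≠ 0) : IsHereditarySubalgebra (eigenCorner m r) :=
  ⟨isClosed m r, ⟨k, hk, hk0⟩, zero_mem m r, fun _ hx _ hy => add_mem hx hy,
    fun c _ hx => smul_mem c hx, fun _ hx _ hy => mul_mem hx hy, fun _ hx => star_mem hm hx,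
    fun _ hz _ hb hbz => mem_of_nonneg_of_le hm hz hb hbz⟩

lemma smul_mul_self_le_mul_mul {a x : A} (hma : m ≤ a) (hx : x ∈ eigenCorner m r)
    (hxsa : IsSelfAdjoint x) : r • (x * x) ≤ x * a * x := by
  have hsplit : x * a * x = r • (x * x) + x * (a - m) * x := by
    rw [mul_sub, sub_mul, hx.1, smul_mul_assoc]
    abel
  have hrest : 0 ≤ x * (a - m) * x := by
    simpa only [hxsa.star_eq] using star_left_conjugate_nonneg (sub_nonneg.mpr hma) x
  rw [hsplit]
  exact le_add_of_nonneg_right hrest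

end eigenCorner

section SpectralCut

variable {A : Type*} [NonUnitalCStarAlgebra A] [PartialOrder A] [StarOrderedRing A]
  {a : A}

lemma cfcₙ_min_le (ha : 0 ≤ a) {ε : ℝ} (hε : 0 ≤ ε) : cfcₙ (fun t => min t ε) a ≤ a := by
  conv_rhs => rw [← cfcₙ_id' ℝ a]
  exact cfcₙ_mono (fun t _ => min_le_left t ε) (hf0 := min_eq_left hε)

lemma sub_cfcₙ_min_eq (ha : 0 ≤ a) {ε : ℝ} (hε : 0 ≤ ε) :
    a - cfcₙ (fun t => min t ε) a = cfcₙ (fun t => t - min t ε) a := by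
  rw [cfcₙ_sub (fun t : ℝ => t) (fun t => min t ε) a (by fun_prop) (by simp)
    (by fun_prop) (min_eq_left hε), cfcₙ_id' ℝ a]

lemma sub_cfcₙ_min_mem_eigenCorner (ha : 0 ≤ a) {ε : ℝ} (hε : 0 ≤ ε) :
    a - cfcₙ (fun t => min t ε) a ∈ eigenCorner (cfcₙ (fun t => min t ε) a) ε := by
  have hcut : ∀ t : ℝ, (t - min t ε) * min t ε = ε * (t - min t ε) := fun t => by
    rcases le_total t ε with h | h
    · simp [min_eq_left h]
    · rw [min_eq_right h]; ring
  have hz : min (0 : ℝ) ε = 0 := min_eq_left hε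
  rw [sub_cfcₙ_min_eq ha hε]
  refine ⟨?_, ?_⟩
  · rw [← cfcₙ_mul _ _ a (by fun_prop) (by simp [hz]) (by fun_prop) hz,
      ← cfcₙ_const_mul ε _ a (by fun_prop) (by simp [hz])]
    exact cfcₙ_congr fun t _ => hcut t
  · rw [← cfcₙ_mul _ _ a (by fun_prop) hz (by fun_prop) (by simp [hz]),
      ← cfcₙ_const_mul ε _ a (by fun_prop) (by simp [hz])]
    exact cfcₙ_congr fun t _ => (mul_comm _ _).trans (hcut t)

lemma sub_cfcₙ_min_ne_zero (ha : 0 ≤ a) {ε : ℝ} (hε : 0 ≤ ε) (hεa : ε < ‖a‖) :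
    a - cfcₙ (fun t => min t ε) a ≠ 0 := by
  intro h
  have hle : ‖cfcₙ (fun t => min t ε) a‖ ≤ ε := norm_cfcₙ_le fun t ht => by
    have ht0 : 0 ≤ t := quasispectrum_nonneg_of_nonneg a ha t ht
    rw [Real.norm_eq_abs, abs_of_nonneg (le_min ht0 hε)]
    exact min_le_right t ε
  rw [← sub_eq_zero.mp h] at hle
  linarith

end SpectralCut

theorem dominating_expectation_supportive_general
    {A B C : Type*} [NonUnitalCStarAlgebra A] [PartialOrder A] [StarOrderedRing A]
    [NonUnitalCStarAlgebra B] [PartialOrder B] [StarOrderedRing B]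
    [NonUnitalCStarAlgebra C] [PartialOrder C] [StarOrderedRing C]
    (κ : A →⋆ₙₐ[ℂ] C) (hκ : Isometry κ)
    (E : B →ₗ[ℂ] C)
    (hdom : ∀ b : B, 0 ≤ b → E b ≠ 0 → ∃ a : A, a ≠ 0 ∧ 0 ≤ a ∧ κ a ≤ E b) :
    ∀ b : B, 0 ≤ b → E b ≠ 0 →
      ∃ δ : ℝ, 0 < δ ∧ ∃ D : Set A, IsHereditarySubalgebra D ∧
        ∀ x ∈ D, 0 ≤ x → ‖x‖ = 1 → δ ≤ ‖κ x * E b * κ x‖ := by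
  intro b hb hEb
  obtain ⟨a, ha0, ha, hab⟩ := hdom b hb hEb
  have hε : 0 < ‖a‖ / 2 := by positivity
  set m := cfcₙ (fun t => min t (‖a‖ / 2)) a
  refine ⟨‖a‖ / 2, hε, eigenCorner m (‖a‖ / 2),
    eigenCorner.isHereditarySubalgebra (IsSelfAdjoint.cfcₙ (f := fun t => min t (‖a‖ / 2)))
      (sub_cfcₙ_min_mem_eigenCorner ha hε.le)
      (sub_cfcₙ_min_ne_zero ha hε.le (by linarith [norm_pos_iff.mpr ha0])),
    fun x hx hx0 hx1 => ?_⟩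
  have hxsa : IsSelfAdjoint x := hx0.isSelfAdjoint
  have hle := eigenCorner.smul_mul_self_le_mul_mul (cfcₙ_min_le ha hε.le) hx hxsa
  have hxax : 0 ≤ x * a * x := by
    simpa only [hxsa.star_eq] using star_left_conjugate_nonneg ha x
  have hκle : κ (x * a * x) ≤ κ x * E b * κ x := by
    simpa only [map_mul, ← map_star, hxsa.star_eq] using
      star_left_conjugate_le_conjugate hab (κ x)
  calc ‖a‖ / 2 = ‖(‖a‖ / 2) • (x * x)‖ := by
        rw [norm_smul, hxsa.norm_mul_self, hx1, Real.norm_of_nonneg hε.le]; ring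
    _ ≤ ‖x * a * x‖ :=
        CStarAlgebra.norm_le_norm_of_nonneg_of_le (smul_nonneg hε.le hxsa.mul_self_nonneg) hle
    _ = ‖κ (x * a * x)‖ := (hκ.norm_map_of_map_zero (map_zero κ) _).symm
    _ ≤ ‖κ x * E b * κ x‖ := CStarAlgebra.norm_le_norm_of_nonneg_of_le (map_nonneg κ hxax) hκle

/-- Let `E : B → Ã ⊇ A` be a generalised expectation (realised by
isometric star-homomorphism embeddings `ι : A → B`, `κ : A → Ã`).  If for every positive
`b ∈ B` with `E(b) ≠ 0` there is a nonzero positive `a ∈ A` with `a ≤ E(b)` in `Ã`, then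
`E` is supportive. -/
theorem dominating_expectation_supportive
    {A B C : Type*} [NonUnitalCStarAlgebra A] [PartialOrder A] [StarOrderedRing A]
    [NonUnitalCStarAlgebra B] [PartialOrder B] [StarOrderedRing B]
    [NonUnitalCStarAlgebra C] [PartialOrder C] [StarOrderedRing C] [Nontrivial A]
    (ι : A →⋆ₙₐ[ℂ] B) (κ : A →⋆ₙₐ[ℂ] C) (hι : Isometry ι) (hκ : Isometry κ)
    (E : B →ₗ[ℂ] C)
    (hcp : CompletelyPositive E)
    (hcontr : ∀ b : B, ‖E b‖ ≤ ‖b‖)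
    (hres : ∀ a : A, E (ι a) = κ a)
    (hdom : ∀ b : B, 0 ≤ b → E b ≠ 0 → ∃ a : A, a ≠ 0 ∧ 0 ≤ a ∧ κ a ≤ E b) :
    ∀ b : B, 0 ≤ b → E b ≠ 0 →
      ∃ δ : ℝ, 0 < δ ∧ ∃ D : Set A, IsHereditarySubalgebra D ∧
        ∀ x ∈ D, 0 ≤ x → ‖x‖ = 1 → δ ≤ ‖κ x * E b * κ x‖ :=
  dominating_expectation_supportive_general κ hκ E hdom
end

section
/- Let A ⊆ B be a C*-inclusion and E : B → A a conditional expectation, i.e., a completely positive contractive linear map with values in A that restricts to the identity on A. Then E is supportive: for every positive b ∈ B with E(b) ≠ 0 there are δ > 0 and a hereditary C*-subalgebra D of A such that ‖x E(b) x‖ ≥ δ for every positive x ∈ D with ‖x‖ = 1. -/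
/-- A hereditary C*-subalgebra `D` of the subalgebra `A ⊆ B`: a nonzero closed
*-subalgebra of `A` such that `a ∈ D`, `b ∈ A`, `0 ≤ b ≤ a` imply `b ∈ D`. -/
def IsHereditarySubalgebraIn {B : Type*} [NonUnitalCStarAlgebra B] [PartialOrder B]
    [StarOrderedRing B] (A D : Set B) : Prop :=
  D ⊆ A ∧ IsClosed D ∧ (∃ x ∈ D, x ≠ 0) ∧ (0 : B) ∈ D ∧
    (∀ x ∈ D, ∀ y ∈ D, x + y ∈ D) ∧ (∀ (c : ℂ), ∀ x ∈ D, c • x ∈ D) ∧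
    (∀ x ∈ D, ∀ y ∈ D, x * y ∈ D) ∧ (∀ x ∈ D, star x ∈ D) ∧
    ∀ a ∈ D, ∀ b ∈ A, 0 ≤ b → b ≤ a → b ∈ D

namespace CompletelyPositive

variable {B C : Type*} [NonUnitalCStarAlgebra B] [PartialOrder B] [StarOrderedRing B]
  [NonUnitalCStarAlgebra C] [PartialOrder C] [StarOrderedRing C]

lemma nonneg_apply {E : B →ₗ[ℂ] C} (hE : CompletelyPositive E) {b : B} (hb : 0 ≤ b) :
    0 ≤ E b := by
  obtain ⟨s, rfl⟩ := CStarAlgebra.nonneg_iff_eq_star_mul_self.mp hb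
  obtain ⟨z, hz⟩ := hE 1 (Matrix.of fun _ _ => star s * s)
    ⟨Matrix.of fun _ _ => s, by ext i j; simp [Matrix.mul_apply]⟩
  have h00 := congrFun (congrFun hz 0) 0
  simp only [Matrix.map_apply, Matrix.of_apply, Matrix.mul_apply, Matrix.conjTranspose_apply,
    Finset.univ_unique, Fin.default_eq_zero, Finset.sum_singleton] at h00
  exact h00 ▸ star_mul_self_nonneg _

end CompletelyPositive

namespace IsCStarSubalgebra

variable {B : Type*} [NonUnitalCStarAlgebra B] {A : Set B}

def toNonUnitalStarSubalgebra (hA : IsCStarSubalgebra A) : NonUnitalStarSubalgebra ℂ B where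
  carrier := A
  zero_mem' := hA.2.1
  add_mem' {x y} hx hy := hA.2.2.1 x hx y hy
  smul_mem' := hA.2.2.2.1
  mul_mem' {x y} hx hy := hA.2.2.2.2.1 x hx y hy
  star_mem' := hA.2.2.2.2.2 _

lemma cfcₙ_mem (hA : IsCStarSubalgebra A) (f : ℝ → ℝ) {a : B} (ha : a ∈ A) : cfcₙ f a ∈ A :=
  _root_.cfcₙ_mem (s := hA.toNonUnitalStarSubalgebra) (hs := hA.1) f (a := a) ha

end IsCStarSubalgebra

def unitCorner {B : Type*} [Mul B] (A : Set B) (k : B) : Set B :=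
  {x | x ∈ A ∧ x * k = x ∧ k * x = x}

section UnitCorner

variable {B : Type*} [NonUnitalCStarAlgebra B] [PartialOrder B] [StarOrderedRing B]

/-- Writing `b = s⋆s` and `d - b = y⋆y`, the elements `w = s - sk` and `z = y - yk` satisfy
`w⋆w + z⋆z = d - dk - kd + kdk = 0`, which forces `w = 0`. -/
lemma mul_eq_self_of_nonneg_of_le {k b d : B} (hk : IsSelfAdjoint k) (hb : 0 ≤ b) (hbd : b ≤ d)
    (hdk : d * k = d) (hkd : k * d = d) : b * k = b := by
  obtain ⟨s, rfl⟩ := CStarAlgebra.nonneg_iff_eq_star_mul_self.mp hb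
  obtain ⟨y, hy⟩ := CStarAlgebra.nonneg_iff_eq_star_mul_self.mp (sub_nonneg.mpr hbd)
  set w := s - s * k
  set z := y - y * k
  have hsum : star w * w + star z * z = 0 := by
    have hd : star s * s + star y * y = d := by rw [← hy]; abel
    calc star w * w + star z * z
        = (star s * s + star y * y) - (star s * s + star y * y) * k
            - k * (star s * s + star y * y) + k * ((star s * s + star y * y) * k) := by
          simp only [w, z, star_sub, star_mul, hk.star_eq]; noncomm_ring
      _ = 0 := by rw [hd, hdk, hkd]; abel
  have hw : star w * w = 0 :=
    le_antisymm (eq_neg_of_add_eq_zero_left hsum ▸ neg_nonpos_of_nonneg (star_mul_self_nonneg z))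
      (star_mul_self_nonneg w)
  have hsk : s * k = s := (sub_eq_zero.mp (CStarRing.star_mul_self_eq_zero_iff w |>.mp hw)).symm
  rw [mul_assoc, hsk]

lemma IsCStarSubalgebra.isHereditarySubalgebraIn_unitCorner {A : Set B}
    (hA : IsCStarSubalgebra A) {k : B} (hk : IsSelfAdjoint k) (hne : ∃ x ∈ unitCorner A k, x ≠ 0) :
    IsHereditarySubalgebraIn A (unitCorner A k) := by
  obtain ⟨hAclosed, hA0, hAadd, hAsmul, hAmul, hAstar⟩ := hA
  refine ⟨fun x hx ↦ hx.1, ?_, hne, ⟨hA0, zero_mul k, mul_zero k⟩, ?_, ?_, ?_, ?_, ?_⟩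
  · exact hAclosed.inter ((isClosed_eq (continuous_mul_const k) continuous_id).inter
      (isClosed_eq (continuous_const_mul k) continuous_id))
  · rintro x ⟨hxA, hxk, hkx⟩ y ⟨hyA, hyk, hky⟩
    exact ⟨hAadd x hxA y hyA, by rw [add_mul, hxk, hyk], by rw [mul_add, hkx, hky]⟩
  · rintro r x ⟨hxA, hxk, hkx⟩
    exact ⟨hAsmul r x hxA, by rw [smul_mul_assoc, hxk], by rw [mul_smul_comm, hkx]⟩
  · rintro x ⟨hxA, hxk, hkx⟩ y ⟨hyA, hyk, hky⟩
    exact ⟨hAmul x hxA y hyA, by rw [mul_assoc, hyk], by rw [← mul_assoc, hkx]⟩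
  · rintro x ⟨hxA, hxk, hkx⟩
    refine ⟨hAstar x hxA, ?_, ?_⟩
    · rw [← hk.star_eq, ← star_mul, hkx]
    · rw [← hk.star_eq, ← star_mul, hxk]
  · rintro d ⟨-, hdk, hkd⟩ b hbA hb hbd
    have hbk := mul_eq_self_of_nonneg_of_le hk hb hbd hdk hkd
    refine ⟨hbA, hbk, ?_⟩
    simpa only [star_mul, hk.star_eq, hb.isSelfAdjoint.star_eq] using congrArg star hbk

lemma mul_norm_sq_le_norm_mul_mul {a k x : B} {c : ℝ} (hc : 0 ≤ c) (hka : c • (k * k) ≤ a)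
    (hx : 0 ≤ x) (hxk : x * k = x) : c * ‖x‖ ^ 2 ≤ ‖x * a * x‖ := by
  have hconj : x * (c • (k * k)) * x = c • (x * x) := by
    rw [mul_smul_comm, smul_mul_assoc, ← mul_assoc, hxk, hxk]
  calc c * ‖x‖ ^ 2 = ‖c • (x * x)‖ := by
        rw [norm_smul, hx.isSelfAdjoint.norm_mul_self, Real.norm_of_nonneg hc, sq]
    _ ≤ ‖x * a * x‖ := CStarAlgebra.norm_le_norm_of_nonneg_of_le
        (smul_nonneg hc hx.isSelfAdjoint.mul_self_nonneg)
        (hconj ▸ conjugate_le_conjugate_of_nonneg hka hx)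

end UnitCorner

section CutOff

variable {B : Type*} [NonUnitalCStarAlgebra B] {a : B} {c : ℝ}

lemma cfcₙ_min_one_div_mul_cfcₙ_max_sub (hc : 0 < c) :
    cfcₙ (fun t ↦ min 1 (t / c)) a * cfcₙ (fun t ↦ max 0 (t - c)) a =
      cfcₙ (fun t ↦ max 0 (t - c)) a := by
  rw [← cfcₙ_mul (fun t ↦ min 1 (t / c)) (fun t ↦ max 0 (t - c)) a (hg0 := by simp [hc.le])]
  refine cfcₙ_congr fun t _ ↦ ?_
  rcases le_total t c with htc | hct
  · simp [htc]
  · simp [(one_le_div hc).mpr hct]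

variable [PartialOrder B] [StarOrderedRing B]

lemma smul_mul_self_cfcₙ_min_one_div_le (ha : 0 ≤ a) (hc : 0 < c) :
    c • (cfcₙ (fun t ↦ min 1 (t / c)) a * cfcₙ (fun t ↦ min 1 (t / c)) a) ≤ a :=
  calc c • (cfcₙ (fun t ↦ min 1 (t / c)) a * cfcₙ (fun t ↦ min 1 (t / c)) a)
      = cfcₙ (fun t ↦ c * (min 1 (t / c) * min 1 (t / c))) a := by
        rw [cfcₙ_const_mul c (fun t ↦ min 1 (t / c) * min 1 (t / c)) a,
          cfcₙ_mul (fun t ↦ min 1 (t / c)) (fun t ↦ min 1 (t / c)) a]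
    _ ≤ cfcₙ (fun t ↦ t) a := cfcₙ_mono fun t ht ↦ by
        have ht0 := quasispectrum_nonneg_of_nonneg a ha t ht
        have h1 : min 1 (t / c) ≤ 1 := min_le_left _ _
        have h2 : c * min 1 (t / c) ≤ t :=
          (mul_le_mul_of_nonneg_left (min_le_right _ _) hc.le).trans_eq (mul_div_cancel₀ t hc.ne')
        have h3 : 0 ≤ min 1 (t / c) := le_min zero_le_one (div_nonneg ht0 hc.le)
        nlinarith
    _ = a := cfcₙ_id' ℝ a

lemma cfcₙ_max_sub_ne_zero (ha : 0 ≤ a) (hc : 0 ≤ c) (hca : c < ‖a‖) :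
    cfcₙ (fun t ↦ max 0 (t - c)) a ≠ 0 := by
  intro h0
  have hf := eqOn_of_cfcₙ_eq_cfcₙ (h0.trans (cfcₙ_zero ℝ a).symm)
  refine hca.not_ge ((cfcₙ_id' ℝ a).symm ▸ norm_cfcₙ_le fun t ht ↦ ?_)
  have ht0 := quasispectrum_nonneg_of_nonneg a ha t ht
  have htc := hf ht
  simp only [Pi.zero_apply, max_eq_left_iff, tsub_le_iff_right, zero_add] at htc
  rwa [Real.norm_of_nonneg ht0]

end CutOff

theorem IsCStarSubalgebra.exists_isHereditarySubalgebraIn_half_norm_le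
    {B : Type*} [NonUnitalCStarAlgebra B] [PartialOrder B] [StarOrderedRing B] {A : Set B}
    (hA : IsCStarSubalgebra A) {a : B} (haA : a ∈ A) (ha : 0 ≤ a) (ha0 : a ≠ 0) :
    ∃ D : Set B, IsHereditarySubalgebraIn A D ∧
      ∀ x ∈ D, 0 ≤ x → ‖x‖ = 1 → ‖a‖ / 2 ≤ ‖x * a * x‖ := by
  have hc : 0 < ‖a‖ / 2 := half_pos (norm_pos_iff.mpr ha0)
  set k := cfcₙ (fun t ↦ min 1 (t / (‖a‖ / 2))) a
  set h := cfcₙ (fun t ↦ max 0 (t - ‖a‖ / 2)) a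
  have hkh : k * h = h := cfcₙ_min_one_div_mul_cfcₙ_max_sub hc
  have hhD : h ∈ unitCorner A k :=
    ⟨hA.cfcₙ_mem _ haA, (cfcₙ_commute_cfcₙ _ _ a).eq.trans hkh, hkh⟩
  refine ⟨unitCorner A k, hA.isHereditarySubalgebraIn_unitCorner (cfcₙ_predicate _ a)
    ⟨h, hhD, cfcₙ_max_sub_ne_zero ha hc.le (half_lt_self (norm_pos_iff.mpr ha0))⟩, ?_⟩
  rintro x ⟨-, hxk, -⟩ hx hx1
  simpa [hx1] using mul_norm_sq_le_norm_mul_mul hc.le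
    (smul_mul_self_cfcₙ_min_one_div_le ha hc) hx hxk

theorem conditional_expectation_supportive_general
    {B : Type*} [NonUnitalCStarAlgebra B] [PartialOrder B] [StarOrderedRing B]
    (A : Set B) (hA : IsCStarSubalgebra A)
    (E : B →ₗ[ℂ] B)
    (hrange : ∀ b : B, E b ∈ A)
    (hcp : CompletelyPositive E) :
    ∀ b : B, 0 ≤ b → E b ≠ 0 →
      ∃ δ : ℝ, 0 < δ ∧ ∃ D : Set B, IsHereditarySubalgebraIn A D ∧
        ∀ x ∈ D, 0 ≤ x → ‖x‖ = 1 → δ ≤ ‖x * E b * x‖ := by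
  intro b hb hEb
  obtain ⟨D, hD, hbound⟩ :=
    hA.exists_isHereditarySubalgebraIn_half_norm_le (hrange b) (hcp.nonneg_apply hb) hEb
  exact ⟨‖E b‖ / 2, half_pos (norm_pos_iff.mpr hEb), D, hD, hbound⟩

/-- Any genuine conditional expectation `E : B → A` for a C*-inclusion
`A ⊆ B` is supportive: for every positive `b ∈ B` with `E(b) ≠ 0` there are `δ > 0` and a
hereditary C*-subalgebra `D` of `A` with `‖x E(b) x‖ ≥ δ` for every positive norm-one
`x ∈ D`. -/
theorem conditional_expectation_supportive
    {B : Type*} [NonUnitalCStarAlgebra B] [PartialOrder B] [StarOrderedRing B]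
    (A : Set B) (hA : IsCStarSubalgebra A) (hA0 : ∃ x ∈ A, x ≠ 0)
    (E : B →ₗ[ℂ] B)
    (hrange : ∀ b : B, E b ∈ A)
    (hid : ∀ a ∈ A, E a = a)
    (hcontr : ∀ b : B, ‖E b‖ ≤ ‖b‖)
    (hcp : CompletelyPositive E) :
    ∀ b : B, 0 ≤ b → E b ≠ 0 →
      ∃ δ : ℝ, 0 < δ ∧ ∃ D : Set B, IsHereditarySubalgebraIn A D ∧
        ∀ x ∈ D, 0 ≤ x → ‖x‖ = 1 → δ ≤ ‖x * E b * x‖ :=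
  conditional_expectation_supportive_general A hA E hrange hcp
end

section
/- Let A ⊆ B be an aperiodic C*-inclusion and let E : B → Ã ⊇ A be a supportive generalised expectation. Set N_E := {b ∈ B : E((b c)*(b c)) = 0 for all c ∈ B}. Then for every positive b ∈ B with b ∉ N_E there is a nonzero positive a ∈ A with a ≾ b in the Cuntz preorder: for every ε > 0 there is x ∈ B with ‖a − x* b x‖ < ε. -/
/-!
Choose `c` with `E((bc)⋆(bc)) ≠ 0`. Supportiveness gives `δ > 0` and a hereditary subalgebra `D`,
and aperiodicity a positive norm-one `a₀ ∈ D` such that `w = a₀ (bc)⋆(bc) a₀` lies within `δ/4` of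
a self-adjoint `v ∈ A`. By the Kadison–Schwarz inequality `A` lies in the multiplicative domain of
`E`, so `E(w) = a₀ E((bc)⋆(bc)) a₀` and `‖w‖ ≥ δ`. Hence `a = (v - δ/2)₊ ∈ A` is nonzero, and
`a ≤ e⋆ w e` for a function `e` of `v`. An element is Cuntz below anything dominating it, and
`w = z⋆ b z` with `z = b^{1/2} c a₀`, so `a ≾ b`.
-/

open Filter Topology
open scoped ComplexStarModule

section

variable {U : Type*} [CStarAlgebra U] [PartialOrder U] [StarOrderedRing U]

lemma nonneg_of_forall_smul_add_mul_self_smul_nonneg {y z : U}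
    (h : ∀ t : ℝ, 0 < t → 0 ≤ t • y + (t * t) • z) : 0 ≤ y := by
  have hlim : Tendsto (fun t : ℝ => y + t • z) (𝓝[>] 0) (𝓝 y) := by
    simpa using (tendsto_const_nhds.add (tendsto_id.smul_const z)).mono_left
      (nhdsWithin_le_nhds (a := (0 : ℝ)))
  refine ge_of_tendsto hlim ?_
  filter_upwards [self_mem_nhdsWithin] with t (ht : 0 < t)
  have := smul_nonneg (inv_pos.2 ht).le (h t ht)
  rwa [smul_add, smul_smul, smul_smul, inv_mul_cancel₀ ht.ne', one_smul, ← mul_assoc,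
    inv_mul_cancel₀ ht.ne', one_mul] at this

lemma eq_zero_of_forall_smul_add_star_smul_nonneg {p q r : U}
    (h : ∀ s : ℂ, 0 ≤ s • p + star s • q + (star s * s) • r) : p = 0 := by
  -- Put `s = t c` with `c ∈ {±1, ±i}` and let `t → 0⁺`.
  have hunit : ∀ c : ℂ, star c * c = 1 → 0 ≤ c • p + star c • q := fun c hc =>
    nonneg_of_forall_smul_add_mul_self_smul_nonneg (z := r) fun t _ => by
      have hst : star ((t : ℂ) * c) = t * star c := by simp
      have hnorm : star ((t : ℂ) * c) * (t * c) = ((t * t : ℝ) : ℂ) := by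
        rw [hst, mul_mul_mul_comm, hc]; push_cast; ring
      have := h (t * c)
      rw [hnorm, hst] at this
      simpa only [mul_smul, Complex.coe_smul, smul_add] using this
  have hsum : p + q = 0 := by
    have hneg := hunit (-1) (by simp)
    simp only [star_neg, star_one, neg_smul, one_smul, ← neg_add, neg_nonneg] at hneg
    exact le_antisymm hneg (by simpa using hunit 1 (by simp))
  have hpq : p = q := by
    have hI := hunit Complex.I (by simp)
    have hnegI := hunit (-Complex.I) (by simp)
    simp only [star_neg, Complex.star_def, Complex.conj_I, neg_neg, neg_smul] at hI hnegI
    have hdiff : Complex.I • (p - q) = 0 := by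
      rw [smul_sub]
      exact le_antisymm (by rw [← neg_nonneg]; convert hnegI using 1; abel)
        (by convert hI using 1; abel)
    rw [smul_eq_zero, sub_eq_zero] at hdiff
    exact hdiff.resolve_left Complex.I_ne_zero
  rw [← hpq, ← two_smul ℂ] at hsum
  exact (smul_eq_zero.mp hsum).resolve_left two_ne_zero

end

lemma star_sum_mul_le_of_norm_sum_le_one {A ι : Type*} [NonUnitalCStarAlgebra A] [PartialOrder A]
    [StarOrderedRing A] [Fintype ι] (u v : ι → A) (hu : ‖∑ i, star (u i) * u i‖ ≤ 1) :
    star (∑ i, star (u i) * v i) * (∑ i, star (u i) * v i) ≤ ∑ i, star (v i) * v i := by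
  set p := ∑ i, star (u i) * u i
  set c := ∑ i, star (u i) * v i
  have hc : star c = ∑ i, star (v i) * u i := by simp [c, star_sum, star_mul]
  have hgram : 0 ≤ ∑ i, star (v i) * v i - star c * c - star c * c + star c * p * c := by
    calc (0 : A) ≤ ∑ i, star (v i - u i * c) * (v i - u i * c) :=
          Finset.sum_nonneg fun i _ => star_mul_self_nonneg _
      _ = ∑ i, (star (v i) * v i - star (v i) * u i * c - star c * (star (u i) * v i)
            + star c * (star (u i) * u i) * c) := by
          congr 1; ext i; simp only [star_sub, star_mul]; noncomm_ring
      _ = _ := by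
          simp only [Finset.sum_add_distrib, Finset.sum_sub_distrib, ← Finset.sum_mul,
            ← Finset.mul_sum, hc, c, p]
  have hp : star c * p * c ≤ star c * c :=
    (CStarAlgebra.star_left_conjugate_le_norm_smul (b := p)
      (isSelfAdjoint_sum _ fun i _ => .star_mul_self (u i))).trans <| by
      simpa using smul_le_smul_of_nonneg_right hu (star_mul_self_nonneg c)
  have := add_nonneg hgram (sub_nonneg.mpr hp)
  rw [← sub_nonneg]
  convert this using 1
  abel

namespace CompletelyPositive

variable {B C : Type*} [NonUnitalCStarAlgebra B] [NonUnitalCStarAlgebra C] {E : B →ₗ[ℂ] C}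

lemma star_map_mul_map_le_of_norm_le_one (hE : CompletelyPositive E)
    (hcontr : ∀ b : B, ‖E b‖ ≤ ‖b‖) {e : B} (he : ‖e‖ ≤ 1) (x : B) :
    star (E (star e * x) : Unitization ℂ C) * E (star e * x)
      ≤ (E (star x * x) : Unitization ℂ C) := by
  set y : Matrix (Fin 2) (Fin 2) B := !![e, x; 0, 0]
  obtain ⟨z, hz⟩ := hE 2 (y.conjTranspose * y) ⟨y, rfl⟩
  have hentry : ∀ i j, (E ((y.conjTranspose * y) i j) : Unitization ℂ C)
      = ∑ k, star (z k i : Unitization ℂ C) * z k j := fun i j => by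
    have := congrFun (congrFun hz i) j
    rw [Matrix.map_apply] at this
    rw [this, Matrix.mul_apply]
    simp [Matrix.conjTranspose_apply, Unitization.inr_mul, Unitization.inr_star]
  have hgram : ∀ i j, (y.conjTranspose * y) i j = star (y 0 i) * y 0 j := fun i j => by
    fin_cases i <;> fin_cases j <;> simp [Matrix.mul_apply, Fin.sum_univ_two, y]
  have hnorm : ‖∑ k, star (z k 0 : Unitization ℂ C) * z k 0‖ ≤ 1 := by
    rw [← hentry, hgram, Unitization.norm_inr]
    refine (hcontr _).trans ?_
    simpa [y, CStarRing.norm_star_mul_self] using mul_le_one₀ he (norm_nonneg e) he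
  have hy0 : y 0 0 = e := rfl
  have hy1 : y 0 1 = x := rfl
  simpa only [← hentry, hgram, hy0, hy1] using
    star_sum_mul_le_of_norm_sum_le_one (fun k => (z k 0 : Unitization ℂ C)) (fun k => z k 1) hnorm

variable [PartialOrder B] [StarOrderedRing B]

lemma exists_map_eq_star_mul_self (hE : CompletelyPositive E) {m : B} (hm : 0 ≤ m) :
    ∃ u : C, E m = star u * u := by
  obtain ⟨z, hz⟩ := hE 1 (Matrix.of fun _ _ => m) ⟨Matrix.of fun _ _ => CFC.sqrt m, by
    ext
    simp [Matrix.mul_apply, (CFC.sqrt_nonneg m).isSelfAdjoint.star_eq, CFC.sqrt_mul_sqrt_self m hm]⟩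
  exact ⟨z 0 0, by simpa [Matrix.mul_apply] using congrFun (congrFun hz 0) 0⟩

lemma isSelfAdjoint_map (hE : CompletelyPositive E) {s : B} (hs : IsSelfAdjoint s) :
    IsSelfAdjoint (E s) := by
  obtain ⟨u, hu⟩ := hE.exists_map_eq_star_mul_self (CFC.posPart_nonneg s)
  obtain ⟨v, hv⟩ := hE.exists_map_eq_star_mul_self (CFC.negPart_nonneg s)
  rw [← CFC.posPart_sub_negPart s, map_sub, hu, hv]
  exact (IsSelfAdjoint.star_mul_self u).sub (.star_mul_self v)

lemma map_star (hE : CompletelyPositive E) (x : B) : E (star x) = star (E x) := by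
  have hre := hE.isSelfAdjoint_map (ℜ x).2
  have him := hE.isSelfAdjoint_map (ℑ x).2
  conv_lhs => rw [← realPart_add_I_smul_imaginaryPart x]
  conv_rhs => rw [← realPart_add_I_smul_imaginaryPart x]
  simp only [star_add, star_smul, map_add, map_smul, (ℜ x).2.star_eq, (ℑ x).2.star_eq,
    hre.star_eq, him.star_eq, Complex.star_def, Complex.conj_I]

/-- Kadison–Schwarz inequality. `C` carries no order, so it is stated in `Unitization ℂ C`. -/
lemma star_map_mul_map_le (hE : CompletelyPositive E) (hcontr : ∀ b : B, ‖E b‖ ≤ ‖b‖) (x : B) :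
    star (E x : Unitization ℂ C) * E x ≤ (E (star x * x) : Unitization ℂ C) := by
  have hl := CStarAlgebra.increasingApproximateUnit B
  have hEc : Continuous E :=
    AddMonoidHomClass.continuous_of_bound E 1 fun b => by simpa using hcontr b
  have hmul : Tendsto (fun e => star e * x) (CStarAlgebra.approximateUnit B) (𝓝 x) :=
    (hl.tendsto_mul_right x).congr' <| by
      filter_upwards [hl.eventually_star_eq] with e he
      rw [he]
  have hlim := ((Unitization.isometry_inr (𝕜 := ℂ)).continuous.tendsto _).comp
    ((hEc.tendsto x).comp hmul)
  refine le_of_tendsto (hlim.star.mul hlim) ?_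
  filter_upwards [hl.eventually_norm] with e he
  exact hE.star_map_mul_map_le_of_norm_le_one hcontr he x

lemma map_star_mul_of_map_star_mul_self (hE : CompletelyPositive E)
    (hcontr : ∀ b : B, ‖E b‖ ≤ ‖b‖) {x : B} (hx : E (star x * x) = star (E x) * E x) (y : B) :
    E (star x * y) = star (E x) * E y := by
  -- By Kadison–Schwarz the defect form `G` is positive; it vanishes at `(x, x)`.
  let G : B → B → Unitization ℂ C := fun r s =>
    E (star r * s) - star (E r : Unitization ℂ C) * E s
  have hG : ∀ r, 0 ≤ G r r := fun r => sub_nonneg.mpr (hE.star_map_mul_map_le hcontr r)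
  have hxx : G x x = 0 := by simp [G, hx, Unitization.inr_mul, Unitization.inr_star]
  have hexpand : ∀ s : ℂ, G (x + s • y) (x + s • y)
      = s • G x y + star s • G y x + (star s * s) • G y y := fun s => by
    rw [← zero_add (s • G x y), ← hxx]
    simp only [G, star_add, star_smul, add_mul, mul_add, smul_mul_assoc, mul_smul_comm, map_add,
      map_smul, Unitization.inr_add, Unitization.inr_smul]
    module
  have hzero : G x y = 0 :=
    eq_zero_of_forall_smul_add_star_smul_nonneg fun s => hexpand s ▸ hG (x + s • y)
  apply Unitization.inr_injective (R := ℂ)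
  simpa [G, sub_eq_zero, Unitization.inr_mul, Unitization.inr_star] using hzero

variable {A : Type*} [NonUnitalCStarAlgebra A] {ι : A →⋆ₙₐ[ℂ] B} {κ : A →⋆ₙₐ[ℂ] C}

lemma map_mul_left (hE : CompletelyPositive E) (hcontr : ∀ b : B, ‖E b‖ ≤ ‖b‖)
    (hres : ∀ a : A, E (ι a) = κ a) (a : A) (z : B) : E (ι a * z) = κ a * E z := by
  have hstar : star (ι (star a)) = ι a := by rw [StarHomClass.map_star, star_star]
  have hmd : E (star (ι (star a)) * ι (star a)) = star (E (ι (star a))) * E (ι (star a)) := by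
    rw [hstar, ← map_mul, hres, hres, map_mul, StarHomClass.map_star, star_star]
  have h := hE.map_star_mul_of_map_star_mul_self hcontr hmd z
  rwa [hstar, hres, StarHomClass.map_star κ, star_star] at h

lemma map_mul_right (hE : CompletelyPositive E) (hcontr : ∀ b : B, ‖E b‖ ≤ ‖b‖)
    (hres : ∀ a : A, E (ι a) = κ a) (a : A) (z : B) : E (z * ι a) = E z * κ a := by
  calc E (z * ι a) = star (E (star (z * ι a))) := by rw [hE.map_star, star_star]
    _ = star (E (ι (star a) * star z)) := by rw [star_mul, StarHomClass.map_star]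
    _ = star (κ (star a) * E (star z)) := by rw [hE.map_mul_left hcontr hres]
    _ = E z * κ a := by rw [star_mul, hE.map_star, star_star, StarHomClass.map_star, star_star]

end CompletelyPositive

section

variable {U : Type*} [CStarAlgebra U] [PartialOrder U] [StarOrderedRing U]

lemma le_add_algebraMap_of_norm_sub_le {x y : U} (hx : IsSelfAdjoint x) (hy : IsSelfAdjoint y)
    {ε : ℝ} (h : ‖x - y‖ ≤ ε) : x ≤ y + algebraMap ℝ U ε :=
  sub_le_iff_le_add'.mp <| (hx.sub hy).le_algebraMap_norm_self.trans (algebraMap_mono U h)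

lemma exists_norm_mul_self_sub_star_mul_mul_le {s q : U} (hs : IsSelfAdjoint s)
    (hsq : s * s ≤ q) {t : ℝ} (ht : 0 < t) :
    ∃ g : U, ‖s * s - star (g * s) * q * (g * s)‖ ≤ t := by
  have hss : 0 ≤ s * s := by simpa only [hs.star_eq] using star_mul_self_nonneg s
  have hq : 0 ≤ q := hss.trans hsq
  -- `G = (q + t)^(-1/2)` has `1 - G q G = t G²` and `‖G q G‖ ≤ 1`, so the defect
  -- `t (G s)⋆(G s)` has norm at most `t ‖G s² G‖ ≤ t ‖G q G‖ ≤ t`.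
  have hpos : ∀ x : ℝ, 0 < max x 0 + t := fun x => by positivity
  set f : ℝ → ℝ := fun x => (√(max x 0 + t))⁻¹
  have hf : Continuous f := ((continuous_id.max continuous_const).add continuous_const).sqrt.inv₀
    fun x => (Real.sqrt_pos.2 (hpos x)).ne'
  have hff : ∀ x, f x * f x = (max x 0 + t)⁻¹ := fun x => by
    rw [← mul_inv, Real.mul_self_sqrt (hpos x).le]
  set G := cfc f q
  have hG : IsSelfAdjoint G := cfc_predicate f q
  have hGqG : G * q * G = cfc (fun x => f x * x * f x) q := by
    rw [cfc_mul (fun x => f x * x) f q (hf.mul continuous_id).continuousOn hf.continuousOn,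
      cfc_mul f (fun x => x) q hf.continuousOn continuousOn_id, cfc_id' ℝ q]
  have hunit : 1 - G * q * G = t • (G * G) := by
    rw [hGqG, ← cfc_mul f f q hf.continuousOn hf.continuousOn,
      ← cfc_smul t (fun x => f x * f x) q (hf.mul hf).continuousOn, ← cfc_one ℝ q,
      ← cfc_sub (1 : ℝ → ℝ) (fun x => f x * x * f x) q continuousOn_const
        ((hf.mul continuous_id).mul hf).continuousOn]
    refine cfc_congr fun x hx => ?_
    have hx0 : 0 ≤ x := spectrum_nonneg_of_nonneg hq hx
    have hxt : x + t ≠ 0 := by positivity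
    simp only [Pi.one_apply, smul_eq_mul, mul_right_comm (f x) x, hff, max_eq_left hx0]
    field_simp
    ring
  have hnorm : ‖G * q * G‖ ≤ 1 := by
    rw [hGqG]
    refine norm_cfc_le zero_le_one fun x hx => ?_
    have hx0 : 0 ≤ x := spectrum_nonneg_of_nonneg hq hx
    rw [mul_right_comm, hff, max_eq_left hx0, Real.norm_of_nonneg (by positivity),
      inv_mul_le_one₀ (by positivity)]
    linarith
  refine ⟨G, ?_⟩
  have hstar : star (G * s) = s * G := by rw [star_mul, hG.star_eq, hs.star_eq]
  calc ‖s * s - star (G * s) * q * (G * s)‖ = ‖t • (star (G * s) * (G * s))‖ := by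
        rw [hstar]
        congr 1
        calc s * s - s * G * q * (G * s) = s * (1 - G * q * G) * s := by noncomm_ring
          _ = _ := by rw [hunit, mul_smul_comm, smul_mul_assoc]; simp only [mul_assoc]
    _ = t * ‖G * (s * s) * G‖ := by
        rw [norm_smul, Real.norm_of_nonneg ht.le, CStarRing.norm_star_mul_self,
          ← CStarRing.norm_self_mul_star, hstar]
        noncomm_ring
    _ ≤ t * ‖G * q * G‖ := by
        gcongr
        refine CStarAlgebra.norm_le_norm_of_nonneg_of_le ?_ ?_
        · simpa only [hG.star_eq] using star_left_conjugate_nonneg hss G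
        · simpa only [hG.star_eq] using star_left_conjugate_le_conjugate hsq G
    _ ≤ t := mul_le_of_le_one_right ht.le hnorm

lemma exists_cfc_le_star_mul_mul_of_le_add_algebraMap {v w : U} (hv : IsSelfAdjoint v) {ε : ℝ}
    (hε : 0 < ε) (h : v ≤ w + algebraMap ℝ U ε) :
    ∃ g : ℝ → ℝ, Continuous g ∧ g 0 = 0 ∧
      cfc (fun x => max (x - 2 * ε) 0) v ≤ star (cfc g v) * w * cfc g v := by
  have hden : ∀ x : ℝ, 0 < max x (2 * ε) - ε := fun x => by
    have := le_max_right x (2 * ε); linarith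
  set g : ℝ → ℝ := fun x => √((max x (2 * ε) - 2 * ε) / (max x (2 * ε) - ε))
  have hg : Continuous g := by
    refine Continuous.sqrt (Continuous.div (by fun_prop) (by fun_prop) fun x => (hden x).ne')
  have hg0 : g 0 = 0 := by simp [g, max_eq_right (by linarith : (0 : ℝ) ≤ 2 * ε)]
  -- `g² (x - ε) = (x - 2ε)₊`, so `(v - 2ε)₊ = e v e - ε e² ≤ e (w + ε) e - ε e² = e w e`.
  have hgg : ∀ x, g x * x * g x - ε * (g x * g x) = max (x - 2 * ε) 0 := fun x => by
    have hnum : 0 ≤ max x (2 * ε) - 2 * ε := by have := le_max_right x (2 * ε); linarith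
    rw [show g x * x * g x - ε * (g x * g x) = g x * g x * (x - ε) by ring,
      Real.mul_self_sqrt (div_nonneg hnum (hden x).le)]
    rcases le_total x (2 * ε) with hx | hx
    · rw [max_eq_right hx, max_eq_right (by linarith)]; simp
    · rw [max_eq_left hx, max_eq_left (by linarith)]
      exact div_mul_cancel₀ _ (by linarith)
  set e := cfc g v
  have he : IsSelfAdjoint e := cfc_predicate g v
  have hcfc : cfc (fun x => max (x - 2 * ε) 0) v = e * v * e - ε • (e * e) := by
    rw [cfc_congr (fun x _ => (hgg x).symm),
      cfc_sub (fun x => g x * x * g x) (fun x => ε * (g x * g x)) v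
        ((hg.mul continuous_id).mul hg).continuousOn
        (continuous_const.mul (hg.mul hg)).continuousOn,
      cfc_mul (fun x => g x * x) g v (hg.mul continuous_id).continuousOn hg.continuousOn,
      cfc_mul g (fun x => x) v hg.continuousOn continuousOn_id, cfc_id' ℝ v,
      cfc_const_mul ε (fun x => g x * g x) v (hg.mul hg).continuousOn,
      cfc_mul g g v hg.continuousOn hg.continuousOn]
  refine ⟨g, hg, hg0, ?_⟩
  rw [hcfc, he.star_eq, sub_le_iff_le_add]
  calc e * v * e ≤ e * (w + algebraMap ℝ U ε) * e := by
        simpa only [he.star_eq] using star_left_conjugate_le_conjugate h e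
    _ = e * w * e + ε • (e * e) := by
        rw [mul_add, add_mul, Algebra.algebraMap_eq_smul_one, mul_smul_comm, mul_one,
          smul_mul_assoc]

end

section Cuntz

variable {B : Type*} [NonUnitalCStarAlgebra B]

/-- Cuntz subequivalence `p ≾ q`. -/
def CuntzLE (p q : B) : Prop :=
  ∀ ε : ℝ, 0 < ε → ∃ x : B, ‖p - star x * q * x‖ < ε

lemma CuntzLE.of_star_mul_mul {p q z : B} (h : CuntzLE p (star z * q * z)) : CuntzLE p q :=
  fun ε hε => by
    obtain ⟨x, hx⟩ := h ε hε
    exact ⟨z * x, by simpa only [star_mul, mul_assoc] using hx⟩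

lemma norm_sub_realPart_le {w : B} (hw : IsSelfAdjoint w) (x : B) : ‖w - ℜ x‖ ≤ ‖w - x‖ := by
  have h : (ℜ (w - x) : B) = w - ℜ x := by rw [map_sub, AddSubgroupClass.coe_sub, hw.coe_realPart]
  exact h ▸ realPart.norm_le (w - x)

variable [PartialOrder B] [StarOrderedRing B]

lemma star_mul_self_eq_star_sqrt_mul_mul {b : B} (hb : 0 ≤ b) (c : B) :
    star (b * c) * (b * c) = star (CFC.sqrt b * c) * b * (CFC.sqrt b * c) := by
  have hs := (CFC.sqrt_nonneg b).isSelfAdjoint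
  have hsb := CFC.sqrt_mul_sqrt_self b hb
  generalize CFC.sqrt b = s at hs hsb
  subst hsb
  simp only [star_mul, hs.star_eq]
  noncomm_ring

lemma CuntzLE.of_le {p q : B} (hp : 0 ≤ p) (hpq : p ≤ q) : CuntzLE p q := by
  intro ε hε
  set s : Unitization ℂ B := ((CFC.sqrt p : B) : Unitization ℂ B)
  have hs : IsSelfAdjoint s := (CFC.sqrt_nonneg p).isSelfAdjoint.inr ℂ
  have hss : s * s = p := by rw [← Unitization.inr_mul, CFC.sqrt_mul_sqrt_self p hp]
  have hsq : s * s ≤ q := by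
    rw [hss, Unitization.inr_le_iff p q hp.isSelfAdjoint (hp.trans hpq).isSelfAdjoint]
    exact hpq
  obtain ⟨g, hg⟩ := exists_norm_mul_self_sub_star_mul_mul_le hs hsq (half_pos hε)
  have hgs : ((g * s).snd : Unitization ℂ B) = g * s := by
    ext <;> simp [s]
  refine ⟨(g * s).snd, ?_⟩
  rw [← Unitization.norm_inr (𝕜 := ℂ)]
  push_cast
  rw [hgs, ← hss]
  linarith

lemma exists_cfcₙ_le_star_mul_mul_of_norm_sub_le {v w : B} (hv : IsSelfAdjoint v)
    (hw : IsSelfAdjoint w) {ε : ℝ} (hε : 0 < ε) (h : ‖w - v‖ ≤ ε) :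
    ∃ e : B, cfcₙ (fun x => max (x - 2 * ε) 0) v ≤ star e * w * e := by
  have hle : (v : Unitization ℂ B) ≤ w + algebraMap ℝ _ ε := by
    refine le_add_algebraMap_of_norm_sub_le (hv.inr ℂ) (hw.inr ℂ) ?_
    rwa [← Unitization.inr_sub, Unitization.norm_inr, norm_sub_rev]
  obtain ⟨g, hg, hg0, hcfc⟩ := exists_cfc_le_star_mul_mul_of_le_add_algebraMap (hv.inr ℂ) hε hle
  refine ⟨cfcₙ g v, ?_⟩
  rw [← Unitization.inr_le_iff _ _ (cfcₙ_predicate _ v) (hw.conjugate' _)]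
  push_cast
  rwa [Unitization.real_cfcₙ_eq_cfc_inr v _ (by simp [hε.le]),
    Unitization.real_cfcₙ_eq_cfc_inr v g hg0]

lemma CuntzLE.cfcₙ_of_norm_sub_le {v w : B} (hv : IsSelfAdjoint v) (hw : 0 ≤ w) {ε : ℝ}
    (hε : 0 < ε) (h : ‖w - v‖ ≤ ε) : CuntzLE (cfcₙ (fun x => max (x - 2 * ε) 0) v) w := by
  obtain ⟨e, he⟩ := exists_cfcₙ_le_star_mul_mul_of_norm_sub_le hv hw.isSelfAdjoint hε h
  exact (CuntzLE.of_le (cfcₙ_nonneg fun x _ => le_max_right _ _) he).of_star_mul_mul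

lemma cfcₙ_ne_zero_of_norm_sub_le {v w : B} (hv : IsSelfAdjoint v) (hw : 0 ≤ w) {ε : ℝ}
    (h : ‖w - v‖ ≤ ε) (hwε : 3 * ε < ‖w‖) : cfcₙ (fun x => max (x - 2 * ε) 0) v ≠ 0 := by
  have hε : 0 ≤ ε := (norm_nonneg _).trans h
  intro h0
  have hspec : ∀ x ∈ spectrum ℝ (v : Unitization ℂ B), x ≤ 2 * ε := fun x hx => by
    rw [← Unitization.quasispectrum_eq_spectrum_inr' ℝ ℂ] at hx
    have := eqOn_of_cfcₙ_eq_cfcₙ (h0.trans (cfcₙ_zero ℝ v).symm) hv (by fun_prop)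
      (by simp [hε]) (by fun_prop) rfl hx
    simpa using this
  have hwv : (w : Unitization ℂ B) ≤ v + algebraMap ℝ _ ε := by
    refine le_add_algebraMap_of_norm_sub_le (hw.isSelfAdjoint.inr ℂ) (hv.inr ℂ) ?_
    rwa [← Unitization.inr_sub, Unitization.norm_inr]
  have hw3 : (w : Unitization ℂ B) ≤ algebraMap ℝ _ (3 * ε) := by
    calc (w : Unitization ℂ B) ≤ algebraMap ℝ _ (2 * ε) + algebraMap ℝ _ ε :=
          hwv.trans (add_le_add_left (le_algebraMap_of_spectrum_le hspec (hv.inr ℂ)) _)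
      _ = algebraMap ℝ _ (3 * ε) := by rw [← map_add]; ring_nf
  have := CStarAlgebra.norm_le_norm_of_nonneg_of_le (Unitization.inr_nonneg_iff.2 hw) hw3
  rw [Unitization.norm_inr, norm_algebraMap', Real.norm_of_nonneg (by positivity)] at this
  linarith


lemma exists_ne_zero_cuntzLE_of_norm_sub_le {A : Type*} [NonUnitalCStarAlgebra A] [PartialOrder A]
    [StarOrderedRing A] (ι : A →⋆ₙₐ[ℂ] B) (hι : Continuous ι) {w : B} (hw : 0 ≤ w) {y : A}
    {ε : ℝ} (hε : 0 < ε) (h : ‖w - ι y‖ ≤ ε) (hwε : 3 * ε < ‖w‖) :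
    ∃ a : A, a ≠ 0 ∧ 0 ≤ a ∧ CuntzLE (ι a) w := by
  have hv : IsSelfAdjoint (ι (ℜ y : A)) := (ℜ y).2.map ι
  have hwv : ‖w - ι (ℜ y : A)‖ ≤ ε := by
    rw [map_realPart]
    exact (norm_sub_realPart_le hw.isSelfAdjoint _).trans h
  have hιa : ι (cfcₙ (fun x => max (x - 2 * ε) 0) (ℜ y : A))
      = cfcₙ (fun x => max (x - 2 * ε) 0) (ι (ℜ y : A)) :=
    ι.map_cfcₙ _ _ (by fun_prop) (by simp [hε.le]) hι (ℜ y).2 hv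
  refine ⟨_, fun h0 => ?_, cfcₙ_nonneg fun x _ => le_max_right _ _,
    hιa ▸ CuntzLE.cfcₙ_of_norm_sub_le hv hw hε hwv⟩
  exact cfcₙ_ne_zero_of_norm_sub_le hv hw hwv hwε (by rw [← hιa, h0, map_zero])

end Cuntz

theorem aperiodic_supportive_Cuntz_domination_general
    {A B C : Type*} [NonUnitalCStarAlgebra A] [PartialOrder A] [StarOrderedRing A]
    [NonUnitalCStarAlgebra B] [PartialOrder B] [StarOrderedRing B]
    [NonUnitalCStarAlgebra C]
    (ι : A →⋆ₙₐ[ℂ] B) (κ : A →⋆ₙₐ[ℂ] C) (hι : Isometry ι)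
    (E : B →ₗ[ℂ] C)
    (hcp : CompletelyPositive E)
    (hcontr : ∀ b : B, ‖E b‖ ≤ ‖b‖)
    (hres : ∀ a : A, E (ι a) = κ a)
    (hap : ∀ x : B, ∀ D : Set A, IsHereditarySubalgebra D → ∀ ε : ℝ, 0 < ε →
      ∃ a ∈ D, 0 ≤ a ∧ ‖a‖ = 1 ∧ ∃ y : A, ‖ι a * x * ι a - ι y‖ < ε)
    (hsupp : ∀ b : B, 0 ≤ b → E b ≠ 0 →
      ∃ δ : ℝ, 0 < δ ∧ ∃ D : Set A, IsHereditarySubalgebra D ∧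
        ∀ x ∈ D, 0 ≤ x → ‖x‖ = 1 → δ ≤ ‖κ x * E b * κ x‖) :
    ∀ b : B, 0 ≤ b → ¬ (∀ c : B, E (star (b * c) * (b * c)) = 0) →
      ∃ a : A, a ≠ 0 ∧ 0 ≤ a ∧
        ∀ ε : ℝ, 0 < ε → ∃ x : B, ‖ι a - star x * b * x‖ < ε := by
  intro b hb hbN
  obtain ⟨c, hc⟩ := not_forall.mp hbN
  obtain ⟨δ, hδ, D, hD, hδD⟩ := hsupp _ (star_mul_self_nonneg (b * c)) hc
  obtain ⟨a₀, ha₀D, ha₀, ha₀1, y, hy⟩ := hap _ D hD (δ / 4) (by positivity)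
  set z := CFC.sqrt b * c * ι a₀
  have hw : ι a₀ * (star (b * c) * (b * c)) * ι a₀ = star z * b * z := by
    rw [star_mul_self_eq_star_sqrt_mul_mul hb]
    simp only [z, star_mul, (ha₀.isSelfAdjoint.map ι).star_eq, mul_assoc]
  have hδw : δ ≤ ‖star z * b * z‖ := calc
    δ ≤ ‖κ a₀ * E (star (b * c) * (b * c)) * κ a₀‖ := hδD a₀ ha₀D ha₀ ha₀1
    _ = ‖E (star z * b * z)‖ := by
      rw [← hw, hcp.map_mul_right hcontr hres, hcp.map_mul_left hcontr hres]
    _ ≤ ‖star z * b * z‖ := hcontr _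
  obtain ⟨a, ha0, ha, hab⟩ := exists_ne_zero_cuntzLE_of_norm_sub_le ι hι.continuous
    (star_left_conjugate_nonneg hb z) (by positivity : 0 < δ / 4) (hw ▸ hy.le) (by linarith)
  exact ⟨a, ha0, ha, hab.of_star_mul_mul⟩

/-- Let `A ⊆ B` be an aperiodic C*-inclusion (`A` embedded via the
isometric star-homomorphism `ι`) and let `E : B → Ã ⊇ A` be a supportive generalised
expectation (with `A ⊆ Ã` realised by the isometric star-homomorphism `κ`).  Then for
every positive `b ∈ B` with `b ∉ N_E := {b : E((bc)*(bc)) = 0 for all c}` there is a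
nonzero positive `a ∈ A` with `a ≾ b` in the Cuntz preorder. -/
theorem aperiodic_supportive_Cuntz_domination
    {A B C : Type*} [NonUnitalCStarAlgebra A] [PartialOrder A] [StarOrderedRing A]
    [NonUnitalCStarAlgebra B] [PartialOrder B] [StarOrderedRing B]
    [NonUnitalCStarAlgebra C] [Nontrivial A]
    (ι : A →⋆ₙₐ[ℂ] B) (κ : A →⋆ₙₐ[ℂ] C) (hι : Isometry ι) (hκ : Isometry κ)
    (E : B →ₗ[ℂ] C)
    (hcp : CompletelyPositive E)
    (hcontr : ∀ b : B, ‖E b‖ ≤ ‖b‖)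
    (hres : ∀ a : A, E (ι a) = κ a)
    (hap : ∀ x : B, ∀ D : Set A, IsHereditarySubalgebra D → ∀ ε : ℝ, 0 < ε →
      ∃ a ∈ D, 0 ≤ a ∧ ‖a‖ = 1 ∧ ∃ y : A, ‖ι a * x * ι a - ι y‖ < ε)
    (hsupp : ∀ b : B, 0 ≤ b → E b ≠ 0 →
      ∃ δ : ℝ, 0 < δ ∧ ∃ D : Set A, IsHereditarySubalgebra D ∧
        ∀ x ∈ D, 0 ≤ x → ‖x‖ = 1 → δ ≤ ‖κ x * E b * κ x‖) :
    ∀ b : B, 0 ≤ b → ¬ (∀ c : B, E (star (b * c) * (b * c)) = 0) →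
      ∃ a : A, a ≠ 0 ∧ 0 ≤ a ∧
        ∀ ε : ℝ, 0 < ε → ∃ x : B, ‖ι a - star x * b * x‖ < ε :=
  aperiodic_supportive_Cuntz_domination_general ι κ hι E hcp hcontr hres hap hsupp
end

section
/- Let A ⊆ B be a C*-inclusion and let N be a closed two-sided ideal of B with N ∩ A = {0} such that for every positive b ∈ B with b ∉ N there is a nonzero positive a ∈ A with a ≾ b. Then N is the hidden ideal of A ⊆ B: every closed two-sided ideal J of B satisfies J ∩ A = {0} if and only if J ⊆ N. In particular, if for every nonzero positive b ∈ B there is a nonzero positive a ∈ A with a ≾ b (i.e., A⁺ supports B), then A detects ideals in B. -/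
/-- Cuntz subequivalence `a ≾ b` in `B`. -/
def CuntzBelow {B : Type*} [NonUnitalCStarAlgebra B] (a b : B) : Prop :=
  ∀ ε : ℝ, 0 < ε → ∃ x : B, ‖a - star x * b * x‖ < ε

lemma abs_mul_one_sub_div_sq_add_sq_mul_sq_le {δ : ℝ} (hδ : 0 < δ) (t : ℝ) :
    |t| * (1 - t / (t ^ 2 + δ ^ 2) * t) ^ 2 ≤ δ / 2 := by
  have hpos : 0 < t ^ 2 + δ ^ 2 := by positivity
  have hsub : 1 - t / (t ^ 2 + δ ^ 2) * t = δ ^ 2 / (t ^ 2 + δ ^ 2) := by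
    field_simp
    ring
  have hamgm : 2 * |t| * δ ≤ t ^ 2 + δ ^ 2 := by
    nlinarith [sq_nonneg (|t| - δ), sq_abs t]
  rw [hsub, div_pow, mul_div_assoc', div_le_div_iff₀ (by positivity) two_pos]
  calc |t| * (δ ^ 2) ^ 2 * 2 = δ ^ 3 * (2 * |t| * δ) := by ring
    _ ≤ δ ^ 3 * (t ^ 2 + δ ^ 2) := by gcongr
    _ ≤ δ * (t ^ 2 + δ ^ 2) ^ 2 := by
      nlinarith [mul_nonneg (mul_nonneg hδ.le hpos.le) (sq_nonneg t)]

section CStarAlgebra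

variable {B : Type*} [NonUnitalCStarAlgebra B]

lemma norm_sub_mul_cfcₙ_star_mul_self_sq_le (b : B) {f : ℝ → ℝ} {C : ℝ}
    (hf : ContinuousOn f (quasispectrum ℝ (star b * b))) (hf0 : f 0 = 0)
    (hC : ∀ t ∈ quasispectrum ℝ (star b * b), |t| * (1 - f t) ^ 2 ≤ C) :
    ‖b - b * cfcₙ f (star b * b)‖ ^ 2 ≤ C := by
  set c := star b * b
  set u := cfcₙ f c
  have hu : star u = u := (cfcₙ_predicate f c : IsSelfAdjoint u).star_eq
  have hcu : cfcₙ (fun t => t - t * f t) c = c - c * u := by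
    rw [cfcₙ_sub _ _ c, cfcₙ_id' ℝ c, cfcₙ_mul _ _ c, cfcₙ_id' ℝ c]
  have hstar_mul_self : cfcₙ (fun t => (t - t * f t) - f t * (t - t * f t)) c =
      star (b - b * u) * (b - b * u) := by
    rw [cfcₙ_sub _ _ c, cfcₙ_mul _ _ c, hcu, star_sub, star_mul, hu]
    simp only [c]
    noncomm_ring
  rw [sq, ← CStarRing.norm_star_mul_self, ← hstar_mul_self]
  refine norm_cfcₙ_le fun t ht => ?_
  calc ‖t - t * f t - f t * (t - t * f t)‖ = |t| * (1 - f t) ^ 2 := by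
        rw [Real.norm_eq_abs, show t - t * f t - f t * (t - t * f t) = t * (1 - f t) ^ 2 by ring,
          abs_mul, abs_sq]
    _ ≤ C := hC t ht

namespace IsClosedTwoSidedIdeal

variable {N : Set B}

lemma zero_mem (hN : IsClosedTwoSidedIdeal N) : (0 : B) ∈ N := hN.2.1

lemma mul_mem_left (hN : IsClosedTwoSidedIdeal N) (b : B) {x : B} (hx : x ∈ N) : b * x ∈ N :=
  hN.2.2.2.2.1 b x hx

lemma mul_mem_right (hN : IsClosedTwoSidedIdeal N) {x : B} (hx : x ∈ N) (b : B) : x * b ∈ N :=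
  hN.2.2.2.2.2 b x hx

lemma mem_of_forall_exists_norm_sub_lt (hN : IsClosedTwoSidedIdeal N) {a : B}
    (h : ∀ ε > 0, ∃ x ∈ N, ‖a - x‖ < ε) : a ∈ N := by
  rw [← hN.1.closure_eq, Metric.mem_closure_iff]
  simpa only [dist_eq_norm] using h

lemma singleton_zero : IsClosedTwoSidedIdeal ({0} : Set B) := by
  refine ⟨isClosed_singleton, rfl, ?_, ?_, ?_, ?_⟩ <;> simp +contextual

lemma mem_of_cuntzBelow (hN : IsClosedTwoSidedIdeal N) {a d : B} (hd : d ∈ N)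
    (had : CuntzBelow a d) : a ∈ N :=
  hN.mem_of_forall_exists_norm_sub_lt fun ε hε =>
    let ⟨x, hx⟩ := had ε hε
    ⟨_, hN.mul_mem_right (hN.mul_mem_left _ hd) x, hx⟩

lemma mem_of_star_mul_self_mem (hN : IsClosedTwoSidedIdeal N) {b : B} (hb : star b * b ∈ N) :
    b ∈ N := by
  refine hN.mem_of_forall_exists_norm_sub_lt fun ε hε => ?_
  set δ := ε ^ 2
  set k : ℝ → ℝ := fun t => t / (t ^ 2 + δ ^ 2)
  have hk : Continuous k := by
    refine continuous_id.div (by fun_prop) fun t => ?_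
    positivity
  have hmem : b * cfcₙ (fun t => k t * t) (star b * b) ∈ N := by
    rw [cfcₙ_mul k _ _ hk.continuousOn, cfcₙ_id' ℝ (star b * b), ← mul_assoc]
    exact hN.mul_mem_left _ hb
  refine ⟨_, hmem, ?_⟩
  have hsq : ‖b - b * cfcₙ (fun t => k t * t) (star b * b)‖ ^ 2 ≤ δ / 2 :=
    norm_sub_mul_cfcₙ_star_mul_self_sq_le b (by fun_prop) (by simp [k])
      fun t _ => abs_mul_one_sub_div_sq_add_sq_mul_sq_le (by positivity) t
  exact (pow_lt_pow_iff_left₀ (norm_nonneg _) hε.le two_ne_zero).1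
    (hsq.trans_lt (half_lt_self (by positivity)))

theorem inter_eq_singleton_zero_iff_subset [PartialOrder B] [StarOrderedRing B] {A : Set B}
    (h0A : (0 : B) ∈ A) (hN : IsClosedTwoSidedIdeal N) (hNA : N ∩ A = {0})
    (hsupp : ∀ b : B, 0 ≤ b → b ∉ N → ∃ a ∈ A, a ≠ 0 ∧ CuntzBelow a b)
    {J : Set B} (hJ : IsClosedTwoSidedIdeal J) : J ∩ A = {0} ↔ J ⊆ N := by
  refine ⟨fun hJA b hbJ => ?_, fun hJN => ?_⟩
  · by_contra hbN
    have hcN : star b * b ∉ N := fun h => hbN (hN.mem_of_star_mul_self_mem h)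
    obtain ⟨a, haA, ha0, hab⟩ := hsupp _ (star_mul_self_nonneg b) hcN
    have haJA : a ∈ J ∩ A := ⟨hJ.mem_of_cuntzBelow (hJ.mul_mem_left _ hbJ) hab, haA⟩
    exact ha0 (by simpa [hJA] using haJA)
  · refine Set.Subset.antisymm ?_ (Set.singleton_subset_iff.2 ⟨hJ.zero_mem, h0A⟩)
    exact hNA ▸ Set.inter_subset_inter_left A hJN

theorem inter_ne_singleton_zero [PartialOrder B] [StarOrderedRing B] {A : Set B}
    (h0A : (0 : B) ∈ A) (hsupp : ∀ b : B, 0 ≤ b → b ≠ 0 → ∃ a ∈ A, a ≠ 0 ∧ CuntzBelow a b)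
    {J : Set B} (hJ : IsClosedTwoSidedIdeal J) (hJ0 : J ≠ {0}) : J ∩ A ≠ {0} := fun hJA =>
  have hJ_sub : J ⊆ {0} :=
    (inter_eq_singleton_zero_iff_subset h0A singleton_zero (Set.singleton_inter_of_mem h0A)
      hsupp hJ).1 hJA
  hJ0 (Set.Subset.antisymm hJ_sub (Set.singleton_subset_iff.2 hJ.zero_mem))

end IsClosedTwoSidedIdeal

end CStarAlgebra

open IsClosedTwoSidedIdeal in
theorem support_implies_hidden_ideal_and_detection_general
    {B : Type*} [NonUnitalCStarAlgebra B] [PartialOrder B] [StarOrderedRing B]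
    (A : Set B) (hA : IsCStarSubalgebra A) :
    (∀ N : Set B, IsClosedTwoSidedIdeal N → N ∩ A = {0} →
      (∀ b : B, 0 ≤ b → b ∉ N → ∃ a ∈ A, a ≠ 0 ∧ 0 ≤ a ∧ CuntzBelow a b) →
      ∀ J : Set B, IsClosedTwoSidedIdeal J → (J ∩ A = {0} ↔ J ⊆ N)) ∧
    ((∀ b : B, 0 ≤ b → b ≠ 0 → ∃ a ∈ A, a ≠ 0 ∧ 0 ≤ a ∧ CuntzBelow a b) →
      ∀ J : Set B, IsClosedTwoSidedIdeal J → J ≠ {0} → J ∩ A ≠ {0}) := by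
  refine ⟨fun N hN hNA hsupp J hJ => ?_, fun hsupp J hJ => ?_⟩
  · refine inter_eq_singleton_zero_iff_subset hA.2.1 hN hNA (fun b hb hbN => ?_) hJ
    exact (hsupp b hb hbN).imp fun _ ⟨haA, ha0, _, hab⟩ => ⟨haA, ha0, hab⟩
  · refine inter_ne_singleton_zero hA.2.1 (fun b hb hb0 => ?_) hJ
    exact (hsupp b hb hb0).imp fun _ ⟨haA, ha0, _, hab⟩ => ⟨haA, ha0, hab⟩

/-- Let `A ⊆ B` be a C*-inclusion.  (1) If `N` is a closed two-sided
ideal with `N ∩ A = {0}` such that every positive `b ∉ N` Cuntz-dominates some nonzero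
positive element of `A`, then `N` is the hidden ideal: a closed two-sided ideal `J`
satisfies `J ∩ A = {0}` iff `J ⊆ N`.  (2) In particular, if every nonzero positive
`b ∈ B` Cuntz-dominates some nonzero positive element of `A` (`A⁺` supports `B`), then
`A` detects ideals in `B`. -/
theorem support_implies_hidden_ideal_and_detection
    {B : Type*} [NonUnitalCStarAlgebra B] [PartialOrder B] [StarOrderedRing B]
    (A : Set B) (hA : IsCStarSubalgebra A) (hA0 : ∃ x ∈ A, x ≠ 0) :
    (∀ N : Set B, IsClosedTwoSidedIdeal N → N ∩ A = {0} →
      (∀ b : B, 0 ≤ b → b ∉ N → ∃ a ∈ A, a ≠ 0 ∧ 0 ≤ a ∧ CuntzBelow a b) →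
      ∀ J : Set B, IsClosedTwoSidedIdeal J → (J ∩ A = {0} ↔ J ⊆ N)) ∧
    ((∀ b : B, 0 ≤ b → b ≠ 0 → ∃ a ∈ A, a ≠ 0 ∧ 0 ≤ a ∧ CuntzBelow a b) →
      ∀ J : Set B, IsClosedTwoSidedIdeal J → J ≠ {0} → J ∩ A ≠ {0}) :=
  support_implies_hidden_ideal_and_detection_general A hA
end

section
/- Let Y be a nonempty Baire space and ν : Y → [0, ∞) a function for which there is a comeagre subset C ⊆ Y such that ν is lower semicontinuous at every point of C. Then the following are equivalent: (1) the set {y ∈ Y : ν(y) ≠ 0} is meagre; (2) the set {y ∈ Y : ν(y) ≠ 0} has empty interior; (3) for every ε > 0 the set {y ∈ Y : ν(y) > ε} has empty interior. -/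
/-! At a point of `C` where `ν > ε`, lower semicontinuity puts a whole neighbourhood inside
`{ν > ε}`; so if that set has empty interior it misses `C` and is meagre. Since `{ν ≠ 0}` is
the countable union of the sets `{ν > 1/(n+1)}`, it is then meagre as well, and in a Baire
space meagre sets have empty interior. -/

open Set Topology

theorem IsMeagre.interior_eq_empty {X : Type*} [TopologicalSpace X] [BaireSpace X]
    {s : Set X} (hs : IsMeagre s) : interior s = ∅ :=
  interior_eq_empty_iff_dense_compl.2 (dense_of_mem_residual hs)

section LowerSemicontinuous

variable {X β : Type*} [TopologicalSpace X] [Preorder β] {f : X → β} {C : Set X}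

theorem inter_subset_interior_setOf_lt_of_lowerSemicontinuousAt
    (hf : ∀ x ∈ C, LowerSemicontinuousAt f x) (b : β) :
    {x | b < f x} ∩ C ⊆ interior {x | b < f x} :=
  fun x ⟨hx, hxC⟩ => mem_interior_iff_mem_nhds.2 (hf x hxC b hx)

theorem isMeagre_setOf_lt_of_interior_eq_empty (hC : IsMeagre Cᶜ)
    (hf : ∀ x ∈ C, LowerSemicontinuousAt f x) {b : β}
    (hb : interior {x | b < f x} = ∅) : IsMeagre {x | b < f x} := by
  refine hC.mono fun x hx => ?_
  intro hxC
  simpa [hb] using inter_subset_interior_setOf_lt_of_lowerSemicontinuousAt hf b ⟨hx, hxC⟩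

end LowerSemicontinuous

theorem setOf_ne_zero_eq_iUnion_setOf_lt {X : Type*} {f : X → ℝ} (hf : ∀ x, 0 ≤ f x) :
    {x | f x ≠ 0} = ⋃ n : ℕ, {x | 1 / ((n : ℝ) + 1) < f x} := by
  ext x
  simp only [mem_ofPred_eq, mem_iUnion]
  constructor
  · intro hx
    exact exists_nat_one_div_lt ((hf x).lt_of_ne' hx)
  · rintro ⟨n, hn⟩
    exact (Nat.one_div_pos_of_nat.trans hn).ne'

theorem meagre_iff_empty_interior_of_ae_lowerSemicontinuous_general
    {Y : Type*} [TopologicalSpace Y] [BaireSpace Y]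
    (ν : Y → ℝ) (hν : ∀ y : Y, 0 ≤ ν y)
    (C : Set Y) (hC : IsMeagre Cᶜ)
    (hlsc : ∀ y ∈ C, LowerSemicontinuousAt ν y) :
    (IsMeagre {y : Y | ν y ≠ 0} ↔ interior {y : Y | ν y ≠ 0} = ∅) ∧
    (interior {y : Y | ν y ≠ 0} = ∅ ↔ ∀ ε : ℝ, 0 < ε → interior {y : Y | ε < ν y} = ∅) := by
  have interior_superlevel : interior {y | ν y ≠ 0} = ∅ →
      ∀ ε : ℝ, 0 < ε → interior {y | ε < ν y} = ∅ := fun h ε hε =>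
    subset_eq_empty (interior_mono fun y hy => (hε.trans hy).ne') h
  have meagre_of_superlevel : (∀ ε : ℝ, 0 < ε → interior {y | ε < ν y} = ∅) →
      IsMeagre {y | ν y ≠ 0} := fun h => by
    rw [setOf_ne_zero_eq_iUnion_setOf_lt hν]
    exact isMeagre_iUnion fun n =>
      isMeagre_setOf_lt_of_interior_eq_empty hC hlsc (h _ Nat.one_div_pos_of_nat)
  exact ⟨⟨IsMeagre.interior_eq_empty, meagre_of_superlevel ∘ interior_superlevel⟩,
    ⟨interior_superlevel, IsMeagre.interior_eq_empty ∘ meagre_of_superlevel⟩⟩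

/-- Let `Y` be a nonempty Baire space and `ν : Y → [0, ∞)` a function
that is lower semicontinuous at every point of some comeagre subset `C ⊆ Y`.  Then the
following are equivalent: (1) `{ν ≠ 0}` is meagre; (2) `{ν ≠ 0}` has empty interior;
(3) for every `ε > 0` the set `{ν > ε}` has empty interior. -/
theorem meagre_iff_empty_interior_of_ae_lowerSemicontinuous
    {Y : Type*} [TopologicalSpace Y] [BaireSpace Y] [Nonempty Y]
    (ν : Y → ℝ) (hν : ∀ y : Y, 0 ≤ ν y)
    (C : Set Y) (hC : IsMeagre Cᶜ)
    (hlsc : ∀ y ∈ C, LowerSemicontinuousAt ν y) :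
    (IsMeagre {y : Y | ν y ≠ 0} ↔ interior {y : Y | ν y ≠ 0} = ∅) ∧
    (interior {y : Y | ν y ≠ 0} = ∅ ↔ ∀ ε : ℝ, 0 < ε → interior {y : Y | ε < ν y} = ∅) :=
  meagre_iff_empty_interior_of_ae_lowerSemicontinuous_general ν hν C hC hlsc
end
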